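/- arXiv:2302.05133 — 11 statements merged into one kernel-verified Lean document; each statement's English description precedes it below -/
import Mathlib

section
/- Let d, l, N ≥ 1 be integers, let m > 2 be real, and let L_f ∈ ℝ, L₁ ∈ ℝ, L₂ ≥ 0. Let f : ℝ^d → ℝ^d be odd and f_σ : ℝ^d → ℝ^{d×l} satisfy ⟨a − b, f(a) − f(b)⟩ + 2(m−1)|f_σ(a) − f_σ(b)|² ≤ L_f |a − b|² for all a, b ∈ ℝ^d. Let u : ℝ^d × (ℝ^d)^N → ℝ^d and σ : ℝ^d × (ℝ^d)^N → ℝ^{d×l} satisfy ⟨x − x', u(x,z) − u(x',z')⟩ + 2(m−1)|σ(x,z) − σ(x',z')|² ≤ L₁|x − x'|² + L₂ (1/N)∑_{j=1}^N |z_j − z'_j|² for all x, x' ∈ ℝ^d and z, z' ∈ (ℝ^d)^N. Define V : (ℝ^d)^N → (ℝ^d)^N and Σ̂ : (ℝ^d)^N → (ℝ^{d×l})^N by V(x)_i = u(x_i, x) + (1/N)∑_{j=1}^N f(x_i − x_j) and Σ̂(x)_i = σ(x_i, x) + (1/N)∑_{j=1}^N f_σ(x_i − x_j). Then for all x, y ∈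 (ℝ^d)^N: ∑_{i=1}^N ⟨x_i − y_i, V(x)_i − V(y)_i⟩ + ((m−1)/2) ∑_{i=1}^N |Σ̂(x)_i − Σ̂(y)_i|² ≤ (2·max(L_f,0) + L₁ + L₂) ∑_{i=1}^N |x_i − y_i|²; in particular the functions V and Σ̂ of the interacting particle system satisfy a monotonicity (one-sided Lipschitz) condition in (ℝ^d)^N with constant independent of N. -/
open scoped RealInnerProductSpace BigOperators

set_option maxHeartbeats 1600000 in
/-- Lemma: properties of the particle system as a system in `ℝ^{Nd}`.
The maps `V` and `Σ̂` of the interacting particle system satisfy a monotonicity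
(one-sided Lipschitz) condition in `(ℝ^d)^N` with a constant independent of `N`.
Matrices `ℝ^{d×l}` with the Frobenius norm are modelled by `EuclideanSpace ℝ (Fin d × Fin l)`. -/
theorem particle_system_monotonicity
    (d l N : ℕ) (hd : 1 ≤ d) (hl : 1 ≤ l) (hN : 1 ≤ N)
    (m : ℝ) (hm : 2 < m)
    (Lf L1 L2 : ℝ) (hL2 : 0 ≤ L2)
    (f : EuclideanSpace ℝ (Fin d) → EuclideanSpace ℝ (Fin d))
    (fσ : EuclideanSpace ℝ (Fin d) → EuclideanSpace ℝ (Fin d × Fin l))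
    (hodd : ∀ x, f (-x) = - f x)
    (hffσ : ∀ a b : EuclideanSpace ℝ (Fin d),
      ⟪a - b, f a - f b⟫ + 2 * (m - 1) * ‖fσ a - fσ b‖ ^ 2 ≤ Lf * ‖a - b‖ ^ 2)
    (u : EuclideanSpace ℝ (Fin d) → (Fin N → EuclideanSpace ℝ (Fin d)) → EuclideanSpace ℝ (Fin d))
    (σ : EuclideanSpace ℝ (Fin d) → (Fin N → EuclideanSpace ℝ (Fin d)) →
      EuclideanSpace ℝ (Fin d × Fin l))
    (huσ : ∀ (x x' : EuclideanSpace ℝ (Fin d)) (z z' : Fin N → EuclideanSpace ℝ (Fin d)),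
      ⟪x - x', u x z - u x' z'⟫ + 2 * (m - 1) * ‖σ x z - σ x' z'‖ ^ 2
        ≤ L1 * ‖x - x'‖ ^ 2 + L2 * ((N : ℝ)⁻¹ * ∑ j, ‖z j - z' j‖ ^ 2))
    (V : (Fin N → EuclideanSpace ℝ (Fin d)) → Fin N → EuclideanSpace ℝ (Fin d))
    (hV : ∀ x i, V x i = u (x i) x + (N : ℝ)⁻¹ • ∑ j, f (x i - x j))
    (Sig : (Fin N → EuclideanSpace ℝ (Fin d)) → Fin N → EuclideanSpace ℝ (Fin d × Fin l))
    (hSig : ∀ x i, Sig x i = σ (x i) x + (N : ℝ)⁻¹ • ∑ j, fσ (x i - x j)) :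
    ∀ x y : Fin N → EuclideanSpace ℝ (Fin d),
      (∑ i, ⟪x i - y i, V x i - V y i⟫) + ((m - 1) / 2) * ∑ i, ‖Sig x i - Sig y i‖ ^ 2
        ≤ (2 * max Lf 0 + L1 + L2) * ∑ i, ‖x i - y i‖ ^ 2 := by
  intro x y
  have hNpos : (0:ℝ) < (N:ℝ) := by exact_mod_cast hN
  have hNinv : (0:ℝ) ≤ (N:ℝ)⁻¹ := by positivity
  have hm1 : (0:ℝ) ≤ m - 1 := by linarith
  have key_sum_sq : ∀ (c : Fin N → EuclideanSpace ℝ (Fin d × Fin l)),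
      ‖∑ j, c j‖ ^ 2 ≤ (N:ℝ) * ∑ j, ‖c j‖ ^ 2 := by
    intro c
    calc ‖∑ j, c j‖ ^ 2 ≤ (∑ j, ‖c j‖) ^ 2 :=
          pow_le_pow_left₀ (norm_nonneg _) (norm_sum_le _ _) 2
      _ ≤ ((Finset.univ : Finset (Fin N)).card : ℝ) * ∑ j, ‖c j‖ ^ 2 :=
          sq_sum_le_card_mul_sum_sq
      _ = (N:ℝ) * ∑ j, ‖c j‖ ^ 2 := by simp
  have hsmul_sq : ∀ (c : Fin N → EuclideanSpace ℝ (Fin d × Fin l)),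
      ‖(N:ℝ)⁻¹ • ∑ j, c j‖ ^ 2 ≤ (N:ℝ)⁻¹ * ∑ j, ‖c j‖ ^ 2 := by
    intro c
    rw [norm_smul, Real.norm_eq_abs, abs_of_nonneg hNinv, mul_pow]
    have h := key_sum_sq c
    have h2 : ((N:ℝ)⁻¹) ^ 2 * ‖∑ j, c j‖ ^ 2
        ≤ ((N:ℝ)⁻¹) ^ 2 * ((N:ℝ) * ∑ j, ‖c j‖ ^ 2) :=
      mul_le_mul_of_nonneg_left h (by positivity)
    have h3 : ((N:ℝ)⁻¹) ^ 2 * ((N:ℝ) * ∑ j, ‖c j‖ ^ 2) = (N:ℝ)⁻¹ * ∑ j, ‖c j‖ ^ 2 := by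
      field_simp
    linarith
  -- notation
  set S : ℝ := ∑ i, ‖x i - y i‖ ^ 2 with hS
  set Sσ : ℝ := ∑ i, ‖σ (x i) x - σ (y i) y‖ ^ 2 with hSσ
  set Dfσ : ℝ := ∑ i, ∑ j, ‖fσ (x i - x j) - fσ (y i - y j)‖ ^ 2 with hDfσ
  set A : ℝ := ∑ i, ∑ j, ⟪x i - y i, f (x i - x j) - f (y i - y j)⟫ with hA'
  have hSnn : 0 ≤ S := Finset.sum_nonneg fun i _ => sq_nonneg _
  have hSσnn : 0 ≤ Sσ := Finset.sum_nonneg fun i _ => sq_nonneg _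
  have hDfσnn : 0 ≤ Dfσ :=
    Finset.sum_nonneg fun i _ => Finset.sum_nonneg fun j _ => sq_nonneg _
  -- Part A : u/σ part
  have hA : (∑ i, ⟪x i - y i, u (x i) x - u (y i) y⟫) + (m - 1) * Sσ ≤ (L1 + L2) * S := by
    have h2 := Finset.sum_le_sum fun (i : Fin N) (_ : i ∈ Finset.univ) => huσ (x i) (y i) x y
    simp only [Finset.sum_add_distrib, ← Finset.mul_sum, Finset.sum_const,
      Finset.card_univ, Fintype.card_fin, nsmul_eq_mul] at h2
    have hc : (N:ℝ) * (L2 * ((N:ℝ)⁻¹ * S)) = L2 * S := by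
      field_simp
    rw [← hS, ← hSσ] at h2
    nlinarith [h2, hSσnn]
  -- antisymmetry of the pairwise drift
  have hanti : ∀ i j : Fin N, f (x j - x i) - f (y j - y i)
      = -(f (x i - x j) - f (y i - y j)) := by
    intro i j
    rw [show x j - x i = -(x i - x j) from (neg_sub _ _).symm, hodd,
      show y j - y i = -(y i - y j) from (neg_sub _ _).symm, hodd]
    abel
  have hswap : (∑ i, ∑ j, (⟪x j - y j, f (x i - x j) - f (y i - y j)⟫ : ℝ)) = -A := by
    rw [Finset.sum_comm]
    have : ∀ a b : Fin N, (⟪x a - y a, f (x b - x a) - f (y b - y a)⟫ : ℝ)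
        = -⟪x a - y a, f (x a - x b) - f (y a - y b)⟫ := by
      intro a b
      rw [hanti a b, inner_neg_right]
    simp only [this, Finset.sum_neg_distrib, hA']
  have h2A : (∑ i, ∑ j,
      (⟪(x i - y i) - (x j - y j), f (x i - x j) - f (y i - y j)⟫ : ℝ)) = 2 * A := by
    have step : ∀ i j : Fin N,
        (⟪(x i - y i) - (x j - y j), f (x i - x j) - f (y i - y j)⟫ : ℝ)
          = ⟪x i - y i, f (x i - x j) - f (y i - y j)⟫
            - ⟪x j - y j, f (x i - x j) - f (y i - y j)⟫ := fun i j =>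
      inner_sub_left _ _ _
    simp only [step, Finset.sum_sub_distrib]
    rw [hswap, ← hA']
    ring
  -- pairwise estimate
  have hpair : ∀ i j : Fin N,
      (⟪(x i - y i) - (x j - y j), f (x i - x j) - f (y i - y j)⟫ : ℝ)
        + 2 * (m - 1) * ‖fσ (x i - x j) - fσ (y i - y j)‖ ^ 2
      ≤ max Lf 0 * (2 * ‖x i - y i‖ ^ 2 + 2 * ‖x j - y j‖ ^ 2) := by
    intro i j
    have h := hffσ (x i - x j) (y i - y j)
    have heq : (x i - x j) - (y i - y j) = (x i - y i) - (x j - y j) := by abel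
    rw [heq] at h
    have h2 : ‖(x i - y i) - (x j - y j)‖ ^ 2 ≤ 2 * ‖x i - y i‖ ^ 2 + 2 * ‖x j - y j‖ ^ 2 := by
      have h3 := norm_sub_le (x i - y i) (x j - y j)
      nlinarith [norm_nonneg (x i - y i), norm_nonneg (x j - y j),
        norm_nonneg ((x i - y i) - (x j - y j)),
        mul_self_le_mul_self (norm_nonneg ((x i - y i) - (x j - y j))) h3,
        sq_nonneg (‖x i - y i‖ - ‖x j - y j‖)]
    have hmax : 0 ≤ max Lf 0 := le_max_right _ _
    have hLfle : Lf * ‖(x i - y i) - (x j - y j)‖ ^ 2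
        ≤ max Lf 0 * ‖(x i - y i) - (x j - y j)‖ ^ 2 :=
      mul_le_mul_of_nonneg_right (le_max_left _ _) (sq_nonneg _)
    nlinarith [mul_le_mul_of_nonneg_left h2 hmax]
  have hsumpair : 2 * A + 2 * (m - 1) * Dfσ ≤ max Lf 0 * (4 * (N:ℝ) * S) := by
    have h := Finset.sum_le_sum fun (i : Fin N) (_ : i ∈ Finset.univ) =>
      Finset.sum_le_sum fun (j : Fin N) (_ : j ∈ Finset.univ) => hpair i j
    have hL : (∑ i, ∑ j, ((⟪(x i - y i) - (x j - y j), f (x i - x j) - f (y i - y j)⟫ : ℝ)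
        + 2 * (m - 1) * ‖fσ (x i - x j) - fσ (y i - y j)‖ ^ 2))
        = 2 * A + 2 * (m - 1) * Dfσ := by
      simp only [Finset.sum_add_distrib, ← Finset.mul_sum]
      rw [h2A, ← hDfσ]
    have hR : (∑ i : Fin N, ∑ j : Fin N,
        max Lf 0 * (2 * ‖x i - y i‖ ^ 2 + 2 * ‖x j - y j‖ ^ 2))
        = max Lf 0 * (4 * (N:ℝ) * S) := by
      simp only [← Finset.mul_sum, Finset.sum_add_distrib, Finset.sum_const,
        Finset.card_univ, Fintype.card_fin, nsmul_eq_mul, ← hS]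
      ring
    rw [hL, hR] at h
    exact h
  -- Part B
  have hB : (∑ i, (⟪x i - y i,
        (N:ℝ)⁻¹ • (∑ j, (f (x i - x j) - f (y i - y j)))⟫ : ℝ))
      + (m - 1) * ((N:ℝ)⁻¹ * Dfσ) ≤ 2 * max Lf 0 * S := by
    have hTf : (∑ i, (⟪x i - y i,
        (N:ℝ)⁻¹ • (∑ j, (f (x i - x j) - f (y i - y j)))⟫ : ℝ)) = (N:ℝ)⁻¹ * A := by
      simp only [real_inner_smul_right, inner_sum, ← Finset.mul_sum, hA']
    rw [hTf]
    have hkey : A + (m - 1) * Dfσ ≤ 2 * (N:ℝ) * max Lf 0 * S := by nlinarith [hsumpair]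
    have := mul_le_mul_of_nonneg_left hkey hNinv
    calc (N:ℝ)⁻¹ * A + (m - 1) * ((N:ℝ)⁻¹ * Dfσ)
        = (N:ℝ)⁻¹ * (A + (m - 1) * Dfσ) := by ring
      _ ≤ (N:ℝ)⁻¹ * (2 * (N:ℝ) * max Lf 0 * S) := this
      _ = 2 * max Lf 0 * S := by field_simp
  -- Part C : Sigma bound
  have hC : (∑ i, ‖Sig x i - Sig y i‖ ^ 2) ≤ 2 * Sσ + 2 * ((N:ℝ)⁻¹ * Dfσ) := by
    have hper : ∀ i : Fin N, ‖Sig x i - Sig y i‖ ^ 2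
        ≤ 2 * ‖σ (x i) x - σ (y i) y‖ ^ 2
          + 2 * ((N:ℝ)⁻¹ * ∑ j, ‖fσ (x i - x j) - fσ (y i - y j)‖ ^ 2) := by
      intro i
      have hdec : Sig x i - Sig y i = (σ (x i) x - σ (y i) y)
          + (N:ℝ)⁻¹ • (∑ j, (fσ (x i - x j) - fσ (y i - y j))) := by
        rw [hSig, hSig, Finset.sum_sub_distrib, smul_sub]
        abel
      rw [hdec]
      have hns : ‖(N:ℝ)⁻¹ • (∑ j, (fσ (x i - x j) - fσ (y i - y j)))‖ ^ 2
          ≤ (N:ℝ)⁻¹ * ∑ j, ‖fσ (x i - x j) - fσ (y i - y j)‖ ^ 2 :=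
        hsmul_sq (fun j => fσ (x i - x j) - fσ (y i - y j))
      have htri := norm_add_le (σ (x i) x - σ (y i) y)
        ((N:ℝ)⁻¹ • (∑ j, (fσ (x i - x j) - fσ (y i - y j))))
      nlinarith [norm_nonneg (σ (x i) x - σ (y i) y),
        norm_nonneg ((N:ℝ)⁻¹ • (∑ j, (fσ (x i - x j) - fσ (y i - y j)))),
        norm_nonneg ((σ (x i) x - σ (y i) y)
          + (N:ℝ)⁻¹ • (∑ j, (fσ (x i - x j) - fσ (y i - y j)))),
        mul_self_le_mul_self (norm_nonneg ((σ (x i) x - σ (y i) y)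
          + (N:ℝ)⁻¹ • (∑ j, (fσ (x i - x j) - fσ (y i - y j))))) htri,
        sq_nonneg (‖σ (x i) x - σ (y i) y‖
          - ‖(N:ℝ)⁻¹ • (∑ j, (fσ (x i - x j) - fσ (y i - y j)))‖)]
    have h := Finset.sum_le_sum fun (i : Fin N) (_ : i ∈ Finset.univ) => hper i
    simp only [Finset.sum_add_distrib, ← Finset.mul_sum] at h
    rw [hSσ, hDfσ]
    exact h
  -- combine
  have hVsplit : ∀ i : Fin N, (⟪x i - y i, V x i - V y i⟫ : ℝ)
      = ⟪x i - y i, u (x i) x - u (y i) y⟫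
        + ⟪x i - y i, (N:ℝ)⁻¹ • (∑ j, (f (x i - x j) - f (y i - y j)))⟫ := by
    intro i
    have hdec : V x i - V y i = (u (x i) x - u (y i) y)
        + (N:ℝ)⁻¹ • (∑ j, (f (x i - x j) - f (y i - y j))) := by
      rw [hV, hV, Finset.sum_sub_distrib, smul_sub]
      abel
    rw [hdec, inner_add_right]
  simp only [hVsplit, Finset.sum_add_distrib]
  have hCmul := mul_le_mul_of_nonneg_left hC (by linarith : (0:ℝ) ≤ (m - 1) / 2)

  nlinarith [hA, hB, hCmul]
end

section
/- Let the one-step method (Ψ_{i,k}) be stochastically C-stable with constants C₀ ≥ 0 and η > 1, let ξ : Ω → (ℝ^d)^N be ℱ_0-measurable and square-integrable, and let X̂ be the discretization generated by the method from ξ, i.e. X̂_0 = ξ and X̂_{k+1,i} = Ψ_{i,k}(X̂_{k,i}, X̂_k, ·). Let X_0, …, X_M : Ω → (ℝ^d)^N be square-integrable with X_k ℱ_k-measurable for each k. Then there exists a constant C > 0 depending only on C₀ such that, writing C_η = 1 + (η − 1)^{−1} and E_{k,i} = X_{k,i} − Ψ_{i,k−1}(X_{k−1,i}, X_{k−1},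 ·), one has: max_{0 ≤ n ≤ M} max_{1 ≤ i ≤ N} 𝔼[|X_{n,i} − X̂_{n,i}|²] ≤ e^{C T} ( max_{1 ≤ i ≤ N} 𝔼[|X_{0,i} − ξ_i|²] + ∑_{k=1}^{M} max_{1 ≤ i ≤ N} [ (1 + h^{−1}) 𝔼[|𝔼[E_{k,i} | ℱ_{k−1}]|²] + C_η 𝔼[|E_{k,i} − 𝔼[E_{k,i} | ℱ_{k−1}]|²] ] ). -/
open scoped RealInnerProductSpace BigOperators MeasureTheory
open MeasureTheory

/-!
Write the error `X_{k+1,i} - X̂_{k+1,i}` as the local error `E_{k+1,i}` plus the propagated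
difference `D = Ψ(X_k) - Ψ(X̂_k)`. By the `L²` Pythagoras identity for conditional expectations,
its second moment is the sum of a conditional-mean part and a fluctuation part; Young's inequality
with weight `h` on the means and `η - 1` on the fluctuations bounds it by the local-error term
plus `(1 + h)` times the C-stability functional of `D`. Bounding the mean-field term by the maximum
over particles gives `S_{k+1} ≤ (1 + h)(1 + 2 C₀ h) S_k + τ_{k+1}` for the maximal mean-square
error `S_k` and maximal local-error term `τ_{k+1}`, and the discrete Gronwall lemma with
`(1 + h)(1 + 2 C₀ h) ≤ exp (C h)`, `C = 1 + 2 C₀ + 2 C₀ T`, closes the argument.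
-/

section L2Estimates

variable {α E : Type*} {m m0 : MeasurableSpace α} {μ : Measure α} [NormedAddCommGroup E]

theorem norm_add_sq_le_weighted (x y : E) {ρ : ℝ} (hρ : 0 < ρ) :
    ‖x + y‖ ^ 2 ≤ (1 + ρ) * ‖x‖ ^ 2 + (1 + ρ⁻¹) * ‖y‖ ^ 2 := by
  have hsq : ‖x + y‖ ^ 2 ≤ (‖x‖ + ‖y‖) ^ 2 := by gcongr; exact norm_add_le x y
  nlinarith [two_mul_le_add_mul_sq (a := ‖x‖) (b := ‖y‖) hρ]

theorem integral_norm_add_sq_le_weighted {f g : α → E} (hf : MemLp f 2 μ) (hg : MemLp g 2 μ)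
    {ρ : ℝ} (hρ : 0 < ρ) :
    ∫ a, ‖f a + g a‖ ^ 2 ∂μ
      ≤ (1 + ρ) * ∫ a, ‖f a‖ ^ 2 ∂μ + (1 + ρ⁻¹) * ∫ a, ‖g a‖ ^ 2 ∂μ := by
  have hf2 := (memLp_two_iff_integrable_sq_norm hf.1).1 hf
  have hg2 := (memLp_two_iff_integrable_sq_norm hg.1).1 hg
  have hfg2 := (memLp_two_iff_integrable_sq_norm (hf.add hg).1).1 (hf.add hg)
  rw [← integral_const_mul, ← integral_const_mul, ← integral_add (hf2.const_mul _)
    (hg2.const_mul _)]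
  exact integral_mono hfg2 ((hf2.const_mul _).add (hg2.const_mul _))
    fun a => norm_add_sq_le_weighted (f a) (g a) hρ

variable [InnerProductSpace ℝ E]

theorem MeasureTheory.Lp.norm_sq_eq_integral_of_ae_eq {G : Lp E 2 μ} {g : α → E}
    (hG : G =ᵐ[μ] g) :
    ‖G‖ ^ 2 = ∫ a, ‖g a‖ ^ 2 ∂μ := by
  rw [← real_inner_self_eq_norm_sq, L2.inner_def]
  exact integral_congr_ae (hG.mono fun a ha => by simp only [ha, real_inner_self_eq_norm_sq])

variable [CompleteSpace E]

theorem integral_norm_sq_eq_condExp_add [IsFiniteMeasure μ] (hm : m ≤ m0) {f : α → E}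
    (hf : MemLp f 2 μ) :
    ∫ a, ‖f a‖ ^ 2 ∂μ = ∫ a, ‖(μ[f|m]) a‖ ^ 2 ∂μ + ∫ a, ‖f a - (μ[f|m]) a‖ ^ 2 ∂μ := by
  set F : Lp E 2 μ := hf.toLp f
  set P : Lp E 2 μ := (condExpL2 E ℝ hm F : Lp E 2 μ)
  have hP : (P : α → E) =ᵐ[μ] μ[f|m] := hf.condExpL2_ae_eq_condExp hm
  have horth : ⟪P, F - P⟫ = 0 := by
    rw [inner_sub_right, inner_condExpL2_eq_inner_fun hm F P (aestronglyMeasurable_condExpL2 hm F),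
      real_inner_comm, sub_self]
  have hpyth : ‖F‖ ^ 2 = ‖P‖ ^ 2 + ‖F - P‖ ^ 2 := by
    have := norm_add_sq_real P (F - P)
    rwa [add_sub_cancel, horth, mul_zero, add_zero] at this
  rwa [Lp.norm_sq_eq_integral_of_ae_eq hf.coeFn_toLp, Lp.norm_sq_eq_integral_of_ae_eq hP,
    Lp.norm_sq_eq_integral_of_ae_eq ((Lp.coeFn_sub F P).trans (hf.coeFn_toLp.sub hP))] at hpyth

theorem integral_norm_sq_add_le_condExp [IsFiniteMeasure μ] (hm : m ≤ m0) {f g : α → E}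
    (hf : MemLp f 2 μ) (hg : MemLp g 2 μ) {h η : ℝ} (hh : 0 < h) (hη : 1 < η) :
    ∫ a, ‖f a + g a‖ ^ 2 ∂μ
      ≤ ((1 + h⁻¹) * ∫ a, ‖(μ[f|m]) a‖ ^ 2 ∂μ
          + (1 + (η - 1)⁻¹) * ∫ a, ‖f a - (μ[f|m]) a‖ ^ 2 ∂μ)
        + (1 + h) * (∫ a, ‖(μ[g|m]) a‖ ^ 2 ∂μ + η * ∫ a, ‖g a - (μ[g|m]) a‖ ^ 2 ∂μ) := by
  have hsum : μ[fun a => f a + g a|m] =ᵐ[μ] μ[f|m] + μ[g|m] :=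
    condExp_add (hf.integrable one_le_two) (hg.integrable one_le_two) m
  have hf' := hf.condExp (m := m) one_le_two
  have hg' := hg.condExp (m := m) one_le_two
  have hmean : ∫ a, ‖(μ[fun a => f a + g a|m]) a‖ ^ 2 ∂μ
      ≤ (1 + h⁻¹) * ∫ a, ‖(μ[f|m]) a‖ ^ 2 ∂μ + (1 + h) * ∫ a, ‖(μ[g|m]) a‖ ^ 2 ∂μ := by
    rw [integral_congr_ae (hsum.mono fun a ha => by rw [ha, Pi.add_apply])]
    simpa only [inv_inv] using integral_norm_add_sq_le_weighted hf' hg' (inv_pos.2 hh)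
  have hfluct : ∫ a, ‖f a + g a - (μ[fun a => f a + g a|m]) a‖ ^ 2 ∂μ
      ≤ (1 + (η - 1)⁻¹) * ∫ a, ‖f a - (μ[f|m]) a‖ ^ 2 ∂μ
        + η * ∫ a, ‖g a - (μ[g|m]) a‖ ^ 2 ∂μ := by
    rw [integral_congr_ae (hsum.mono fun a ha => by rw [ha, Pi.add_apply, add_sub_add_comm])]
    simpa only [inv_inv, add_sub_cancel, Pi.sub_apply] using
      integral_norm_add_sq_le_weighted (hf.sub hf') (hg.sub hg') (inv_pos.2 (sub_pos.2 hη))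
  have hg_fluct : 0 ≤ ∫ a, ‖g a - (μ[g|m]) a‖ ^ 2 ∂μ := by positivity
  rw [integral_norm_sq_eq_condExp_add hm (f := fun a => f a + g a) (hf.add hg)]
  nlinarith [mul_nonneg (mul_nonneg hh.le (by linarith : (0 : ℝ) ≤ η)) hg_fluct]

end L2Estimates

theorem ciSup_le_mul_ciSup_add_ciSup_of_le_mean {ι : Type*} [Fintype ι] [Nonempty ι]
    {a b c : ι → ℝ} {p q : ℝ} (hp : 0 ≤ p) (hq : 0 ≤ q)
    (h : ∀ j, b j ≤ p * a j + q * ((Fintype.card ι : ℝ)⁻¹ * ∑ i, a i) + c j) :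
    ⨆ j, b j ≤ (p + q) * (⨆ j, a j) + ⨆ j, c j := by
  have hmean : (Fintype.card ι : ℝ)⁻¹ * ∑ i, a i ≤ ⨆ j, a j := by
    rw [inv_mul_le_iff₀ (Nat.cast_pos.2 Fintype.card_pos)]
    simpa using Finset.sum_le_card_nsmul Finset.univ a _
      fun i _ => le_ciSup (Set.finite_range a).bddAbove i
  refine ciSup_le fun j => (h j).trans ?_
  have ha : a j ≤ ⨆ j, a j := le_ciSup (Set.finite_range a).bddAbove j
  have hc : c j ≤ ⨆ j, c j := le_ciSup (Set.finite_range c).bddAbove j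
  linarith [mul_le_mul_of_nonneg_left ha hp, mul_le_mul_of_nonneg_left hmean hq]

theorem le_pow_mul_add_sum_of_le_mul_add {u t : ℕ → ℝ} {A : ℝ} {n : ℕ} (hA : 1 ≤ A)
    (ht : ∀ k, 0 ≤ t k) (hstep : ∀ k < n, u (k + 1) ≤ A * u k + t (k + 1)) :
    u n ≤ A ^ n * (u 0 + ∑ k ∈ Finset.Icc 1 n, t k) := by
  induction n with
  | zero => simp
  | succ n ih =>
    have ih := ih fun k hk => hstep k (Nat.lt_succ_of_lt hk)
    have htn : t (n + 1) ≤ A ^ (n + 1) * t (n + 1) :=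
      le_mul_of_one_le_left (ht _) (one_le_pow₀ hA)
    calc u (n + 1) ≤ A * u n + t (n + 1) := hstep n n.lt_succ_self
      _ ≤ A * (A ^ n * (u 0 + ∑ k ∈ Finset.Icc 1 n, t k)) + t (n + 1) := by gcongr
      _ = A ^ (n + 1) * (u 0 + ∑ k ∈ Finset.Icc 1 n, t k) + t (n + 1) := by ring
      _ ≤ A ^ (n + 1) * (u 0 + ∑ k ∈ Finset.Icc 1 (n + 1), t k) := by
        rw [Finset.sum_Icc_succ_top (Nat.le_add_left 1 n)]
        linarith

theorem le_exp_mul_add_sum_of_le_mul_add {u t : ℕ → ℝ} {A c : ℝ} {M n : ℕ} (hA : 1 ≤ A)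
    (hAc : A ≤ Real.exp c) (ht : ∀ k, 0 ≤ t k) (hu : 0 ≤ u 0)
    (hstep : ∀ k < M, u (k + 1) ≤ A * u k + t (k + 1)) (hn : n ≤ M) :
    u n ≤ Real.exp (M * c) * (u 0 + ∑ k ∈ Finset.Icc 1 M, t k) := by
  have hpow : A ^ n ≤ Real.exp (M * c) :=
    calc A ^ n ≤ A ^ M := pow_le_pow_right₀ hA hn
      _ ≤ Real.exp c ^ M := pow_le_pow_left₀ (zero_le_one.trans hA) hAc M
      _ = Real.exp (M * c) := (Real.exp_nat_mul c M).symm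
  have hsum : ∑ k ∈ Finset.Icc 1 n, t k ≤ ∑ k ∈ Finset.Icc 1 M, t k :=
    Finset.sum_le_sum_of_subset_of_nonneg (Finset.Icc_subset_Icc_right hn) fun k _ _ => ht k
  calc u n ≤ A ^ n * (u 0 + ∑ k ∈ Finset.Icc 1 n, t k) :=
        le_pow_mul_add_sum_of_le_mul_add hA ht fun k hk => hstep k (hk.trans_le hn)
    _ ≤ Real.exp (M * c) * (u 0 + ∑ k ∈ Finset.Icc 1 M, t k) := by
      gcongr
      exact add_nonneg hu (Finset.sum_nonneg fun k _ => ht k)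

theorem one_add_mul_one_add_two_mul_le_exp {C₀ h T : ℝ} (hC₀ : 0 ≤ C₀) (hh : 0 ≤ h)
    (hhT : h ≤ T) : (1 + h) * (1 + 2 * C₀ * h) ≤ Real.exp ((1 + 2 * C₀ + 2 * C₀ * T) * h) := by
  refine le_trans ?_ (Real.add_one_le_exp _)
  nlinarith [mul_le_mul_of_nonneg_left hhT (mul_nonneg hC₀ hh)]

section ParticleScheme

variable {Ω E : Type*} [NormedAddCommGroup E]

theorem measurable_memLp_scheme {ι : Type*} [Fintype ι] [MeasurableSpace Ω] [MeasurableSpace E]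
    {ℙ : Measure Ω} {ℱ : ℕ → MeasurableSpace Ω}
    {M : ℕ} {p : ENNReal} {Ψ : ι → ℕ → E → (ι → E) → Ω → E} {Xh : ℕ → Ω → ι → E}
    (hmono : ∀ k < M, ℱ k ≤ ℱ (k + 1))
    (hΨmeas : ∀ i k, k < M → Measurable[MeasurableSpace.prod inferInstance (ℱ (k + 1))]
      (fun q : (E × (ι → E)) × Ω => Ψ i k q.1.1 q.1.2 q.2))
    (hΨint : ∀ i k, k < M → ∀ Z : Ω → ι → E, Measurable[ℱ k] Z → MemLp Z p ℙ →
      MemLp (fun ω => Ψ i k (Z ω i) (Z ω) ω) p ℙ)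
    (hmeas₀ : Measurable[ℱ 0] (Xh 0)) (hmemLp₀ : MemLp (Xh 0) p ℙ)
    (hrec : ∀ k < M, ∀ ω i, Xh (k + 1) ω i = Ψ i k (Xh k ω i) (Xh k ω) ω) :
    ∀ k ≤ M, Measurable[ℱ k] (Xh k) ∧ MemLp (Xh k) p ℙ := by
  intro k
  induction k with
  | zero => exact fun _ => ⟨hmeas₀, hmemLp₀⟩
  | succ k ih =>
    intro hk
    obtain ⟨hmeas, hmemLp⟩ := ih (Nat.le_of_succ_le hk)
    have hcomp : ∀ i, (fun ω => Xh (k + 1) ω i) = fun ω => Ψ i k (Xh k ω i) (Xh k ω) ω :=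
      fun i => funext fun ω => hrec k hk ω i
    refine ⟨?_, memLp_pi_iff.2 fun i => hcomp i ▸ hΨint i k hk _ hmeas hmemLp⟩
    let _ := ℱ (k + 1)
    have hmeas' : Measurable (Xh k) := hmeas.mono (hmono k hk) le_rfl
    refine measurable_pi_iff.2 fun i => hcomp i ▸ (hΨmeas i k hk).comp
      (f := fun ω => ((Xh k ω i, Xh k ω), ω)) ?_
    exact ((measurable_pi_apply i).comp hmeas' |>.prodMk hmeas').prodMk measurable_id

theorem iSup_integral_norm_sq_sub_succ_le [InnerProductSpace ℝ E] [CompleteSpace E] {N : ℕ}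
    [NeZero N] {m mΩ : MeasurableSpace Ω} {ℙ : Measure[mΩ] Ω} [IsFiniteMeasure ℙ] (hm : m ≤ mΩ)
    {h η C₀ : ℝ} (hh : 0 < h) (hη : 1 < η) (hC₀ : 0 ≤ C₀) {Ψ : Fin N → E → (Fin N → E) → Ω → E}
    {P Q P' Q' : Ω → Fin N → E} (hP' : MemLp P' 2 ℙ)
    (hΨP : ∀ j, MemLp (fun ω => Ψ j (P ω j) (P ω) ω) 2 ℙ)
    (hΨQ : ∀ j, MemLp (fun ω => Ψ j (Q ω j) (Q ω) ω) 2 ℙ)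
    (hQ' : ∀ ω j, Q' ω j = Ψ j (Q ω j) (Q ω) ω)
    (hstab : ∀ j,
      (∫ ω, ‖(ℙ[(fun ω' => Ψ j (P ω' j) (P ω') ω' - Ψ j (Q ω' j) (Q ω') ω') | m]) ω‖ ^ 2 ∂ℙ)
        + η * ∫ ω, ‖(Ψ j (P ω j) (P ω) ω - Ψ j (Q ω j) (Q ω) ω)
            - (ℙ[(fun ω' => Ψ j (P ω' j) (P ω') ω' - Ψ j (Q ω' j) (Q ω') ω') | m]) ω‖ ^ 2 ∂ℙ
      ≤ (1 + C₀ * h) * (∫ ω, ‖P ω j - Q ω j‖ ^ 2 ∂ℙ)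
        + C₀ * h * ((N : ℝ)⁻¹ * ∑ j', ∫ ω, ‖P ω j' - Q ω j'‖ ^ 2 ∂ℙ)) :
    ⨆ j, ∫ ω, ‖P' ω j - Q' ω j‖ ^ 2 ∂ℙ
      ≤ (1 + h) * (1 + 2 * C₀ * h) * (⨆ j, ∫ ω, ‖P ω j - Q ω j‖ ^ 2 ∂ℙ)
        + ⨆ j, ((1 + h⁻¹) * ∫ ω, ‖(ℙ[(fun ω' => P' ω' j - Ψ j (P ω' j) (P ω') ω') | m]) ω‖ ^ 2 ∂ℙ
          + (1 + (η - 1)⁻¹) * ∫ ω, ‖(P' ω j - Ψ j (P ω j) (P ω) ω)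
              - (ℙ[(fun ω' => P' ω' j - Ψ j (P ω' j) (P ω') ω') | m]) ω‖ ^ 2 ∂ℙ) := by
  have hA : (1 + h) * (1 + 2 * C₀ * h) = (1 + h) * (1 + C₀ * h) + (1 + h) * (C₀ * h) := by ring
  rw [hA]
  refine ciSup_le_mul_ciSup_add_ciSup_of_le_mean (by positivity) (by positivity) fun j => ?_
  have hsplit : ∀ ω, P' ω j - Q' ω j
      = (P' ω j - Ψ j (P ω j) (P ω) ω) + (Ψ j (P ω j) (P ω) ω - Ψ j (Q ω j) (Q ω) ω) := by
    intro ω; rw [hQ', sub_add_sub_cancel]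
  simp only [hsplit, Fintype.card_fin]
  have hstep := integral_norm_sq_add_le_condExp hm ((memLp_pi_iff.1 hP' j).sub (hΨP j))
    ((hΨP j).sub (hΨQ j)) hh hη
  simp only [Pi.sub_def] at hstep
  linarith [mul_le_mul_of_nonneg_left (hstab j) (by positivity : (0 : ℝ) ≤ 1 + h)]

end ParticleScheme

theorem c_stable_global_error_bound_general
    {Ω : Type} [MeasurableSpace Ω] (ℙ : Measure Ω) [IsProbabilityMeasure ℙ]
    (d : ℕ) (T : ℝ) (hT : 0 < T)
    (C₀ : ℝ) (hC₀ : 0 ≤ C₀) (η : ℝ) (hη : 1 < η) :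
    ∃ C : ℝ, 0 < C ∧
      ∀ (N M : ℕ), 1 ≤ N → 1 ≤ M →
      ∀ h : ℝ, h = T / M →
      -- the filtration
      ∀ ℱ : ℕ → MeasurableSpace Ω, (∀ k, k < M → ℱ k ≤ ℱ (k + 1)) →
        (∀ k, k ≤ M → ℱ k ≤ ‹MeasurableSpace Ω›) →
      -- the one-step method
      ∀ Ψ : Fin N → ℕ → EuclideanSpace ℝ (Fin d) →
          (Fin N → EuclideanSpace ℝ (Fin d)) → Ω → EuclideanSpace ℝ (Fin d),
        -- measurability of the one-step map
        (∀ (i : Fin N) (k : ℕ), k < M →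
          Measurable[MeasurableSpace.prod inferInstance (ℱ (k + 1))]
            (fun q : (EuclideanSpace ℝ (Fin d) × (Fin N → EuclideanSpace ℝ (Fin d))) × Ω =>
              Ψ i k q.1.1 q.1.2 q.2)) →
        -- square integrability of the one-step map
        (∀ (i : Fin N) (k : ℕ), k < M →
          ∀ Z : Ω → Fin N → EuclideanSpace ℝ (Fin d),
            Measurable[ℱ k] Z → MemLp Z 2 ℙ →
            MemLp (fun ω => Ψ i k (Z ω i) (Z ω) ω) 2 ℙ) →
        -- stochastic C-stability with constants C₀ and η
        (∀ (k : ℕ), k < M → ∀ i : Fin N,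
          ∀ P Q : Ω → Fin N → EuclideanSpace ℝ (Fin d),
            Measurable[ℱ k] P → Measurable[ℱ k] Q → MemLp P 2 ℙ → MemLp Q 2 ℙ →
            (∫ ω, ‖(ℙ[(fun ω' => Ψ i k (P ω' i) (P ω') ω' - Ψ i k (Q ω' i) (Q ω') ω') |
                ℱ k]) ω‖ ^ 2 ∂ℙ)
              + η * ∫ ω, ‖(Ψ i k (P ω i) (P ω) ω - Ψ i k (Q ω i) (Q ω) ω)
                  - (ℙ[(fun ω' => Ψ i k (P ω' i) (P ω') ω' - Ψ i k (Q ω' i) (Q ω') ω') |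
                      ℱ k]) ω‖ ^ 2 ∂ℙ
            ≤ (1 + C₀ * h) * (∫ ω, ‖P ω i - Q ω i‖ ^ 2 ∂ℙ)
              + C₀ * h * ((N : ℝ)⁻¹ * ∑ j, ∫ ω, ‖P ω j - Q ω j‖ ^ 2 ∂ℙ)) →
      -- the initial condition
      ∀ ξ : Ω → Fin N → EuclideanSpace ℝ (Fin d), Measurable[ℱ 0] ξ → MemLp ξ 2 ℙ →
      -- the discretization generated by the method
      ∀ Xh : ℕ → Ω → Fin N → EuclideanSpace ℝ (Fin d), Xh 0 = ξ →
        (∀ (k : ℕ), k < M → ∀ (ω : Ω) (i : Fin N),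
          Xh (k + 1) ω i = Ψ i k (Xh k ω i) (Xh k ω) ω) →
      -- the reference adapted square-integrable process
      ∀ X : ℕ → Ω → Fin N → EuclideanSpace ℝ (Fin d),
        (∀ k, k ≤ M → Measurable[ℱ k] (X k)) → (∀ k, k ≤ M → MemLp (X k) 2 ℙ) →
      -- conclusion
      ∀ n, n ≤ M → ∀ i : Fin N,
        ∫ ω, ‖X n ω i - Xh n ω i‖ ^ 2 ∂ℙ
          ≤ Real.exp (C * T) *
            ((⨆ i' : Fin N, ∫ ω, ‖X 0 ω i' - ξ ω i'‖ ^ 2 ∂ℙ)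
              + ∑ k ∈ Finset.Icc 1 M, ⨆ i' : Fin N,
                ((1 + h⁻¹) * ∫ ω, ‖(ℙ[(fun ω' =>
                      X k ω' i' - Ψ i' (k - 1) (X (k - 1) ω' i') (X (k - 1) ω') ω') |
                    ℱ (k - 1)]) ω‖ ^ 2 ∂ℙ
                  + (1 + (η - 1)⁻¹) *
                    ∫ ω, ‖(X k ω i' - Ψ i' (k - 1) (X (k - 1) ω i') (X (k - 1) ω) ω)
                      - (ℙ[(fun ω' =>
                            X k ω' i' - Ψ i' (k - 1) (X (k - 1) ω' i') (X (k - 1) ω') ω') |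
                          ℱ (k - 1)]) ω‖ ^ 2 ∂ℙ)) := by
  set C := 1 + 2 * C₀ + 2 * C₀ * T
  refine ⟨C, by positivity, ?_⟩
  intro N M hN hM h hh ℱ hmono hle Ψ hΨmeas hΨint hstab ξ hξmeas hξL2 Xh hXh0 hXhrec
    X hXmeas hXL2 n hn i
  subst hXh0
  have : NeZero N := ⟨Nat.one_le_iff_ne_zero.1 hN⟩
  have hh0 : 0 < h := hh ▸ div_pos hT (Nat.cast_pos.2 hM)
  have hhT : h ≤ T := hh ▸ div_le_self hT.le (Nat.one_le_cast.2 hM)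
  have hCT : C * T = M * (C * h) := by rw [hh]; field_simp
  have hXh := measurable_memLp_scheme hmono hΨmeas hΨint hξmeas hξL2 hXhrec
  refine (le_ciSup (f := fun j => ∫ ω, ‖X n ω j - Xh n ω j‖ ^ 2 ∂ℙ)
    (Set.finite_range _).bddAbove i).trans ?_
  rw [hCT]
  have hA : 1 ≤ (1 + h) * (1 + 2 * C₀ * h) := by nlinarith [mul_nonneg hC₀ hh0.le]
  refine le_exp_mul_add_sum_of_le_mul_add
    (u := fun k => ⨆ j, ∫ ω, ‖X k ω j - Xh k ω j‖ ^ 2 ∂ℙ) hA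
    (one_add_mul_one_add_two_mul_le_exp hC₀ hh0.le hhT) (fun k => ?_)
    (Real.iSup_nonneg fun j => by positivity) (fun k hk => ?_) hn
  · have hη' : 0 ≤ (η - 1)⁻¹ := inv_nonneg.2 (by linarith)
    exact Real.iSup_nonneg fun j => by positivity
  · obtain ⟨hXhk, hXhk'⟩ := hXh k hk.le
    simpa only [Nat.add_sub_cancel] using iSup_integral_norm_sq_sub_succ_le (hle k hk.le) hh0 hη
      hC₀ (hXL2 (k + 1) hk) (fun j => hΨint j k hk _ (hXmeas k hk.le) (hXL2 k hk.le))
      (fun j => hΨint j k hk _ hXhk hXhk') (hXhrec k hk)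
      (fun j => hstab k hk j _ _ (hXmeas k hk.le) hXhk (hXL2 k hk.le) hXhk')

/-- Global error bound for stochastically C-stable one-step methods
for the particle system. `d` is the state dimension, `T > 0` the terminal time,
`C₀ ≥ 0, η > 1` the C-stability constants. The constant `C` depends only on `C₀`
(in particular it is independent of `N`, `M`, `h = T/M`, the method and the processes). -/
theorem c_stable_global_error_bound
    {Ω : Type} [MeasurableSpace Ω] (ℙ : Measure Ω) [IsProbabilityMeasure ℙ]
    (d : ℕ) (hd : 1 ≤ d) (T : ℝ) (hT : 0 < T)
    (C₀ : ℝ) (hC₀ : 0 ≤ C₀) (η : ℝ) (hη : 1 < η) :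
    ∃ C : ℝ, 0 < C ∧
      ∀ (N M : ℕ), 1 ≤ N → 1 ≤ M →
      ∀ h : ℝ, h = T / M →
      -- the filtration
      ∀ ℱ : ℕ → MeasurableSpace Ω, (∀ k, k < M → ℱ k ≤ ℱ (k + 1)) →
        (∀ k, k ≤ M → ℱ k ≤ ‹MeasurableSpace Ω›) →
      -- the one-step method
      ∀ Ψ : Fin N → ℕ → EuclideanSpace ℝ (Fin d) →
          (Fin N → EuclideanSpace ℝ (Fin d)) → Ω → EuclideanSpace ℝ (Fin d),
        -- measurability of the one-step map
        (∀ (i : Fin N) (k : ℕ), k < M →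
          Measurable[MeasurableSpace.prod inferInstance (ℱ (k + 1))]
            (fun q : (EuclideanSpace ℝ (Fin d) × (Fin N → EuclideanSpace ℝ (Fin d))) × Ω =>
              Ψ i k q.1.1 q.1.2 q.2)) →
        -- square integrability of the one-step map
        (∀ (i : Fin N) (k : ℕ), k < M →
          ∀ Z : Ω → Fin N → EuclideanSpace ℝ (Fin d),
            Measurable[ℱ k] Z → MemLp Z 2 ℙ →
            MemLp (fun ω => Ψ i k (Z ω i) (Z ω) ω) 2 ℙ) →
        -- stochastic C-stability with constants C₀ and η
        (∀ (k : ℕ), k < M → ∀ i : Fin N,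
          ∀ P Q : Ω → Fin N → EuclideanSpace ℝ (Fin d),
            Measurable[ℱ k] P → Measurable[ℱ k] Q → MemLp P 2 ℙ → MemLp Q 2 ℙ →
            (∫ ω, ‖(ℙ[(fun ω' => Ψ i k (P ω' i) (P ω') ω' - Ψ i k (Q ω' i) (Q ω') ω') |
                ℱ k]) ω‖ ^ 2 ∂ℙ)
              + η * ∫ ω, ‖(Ψ i k (P ω i) (P ω) ω - Ψ i k (Q ω i) (Q ω) ω)
                  - (ℙ[(fun ω' => Ψ i k (P ω' i) (P ω') ω' - Ψ i k (Q ω' i) (Q ω') ω') |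
                      ℱ k]) ω‖ ^ 2 ∂ℙ
            ≤ (1 + C₀ * h) * (∫ ω, ‖P ω i - Q ω i‖ ^ 2 ∂ℙ)
              + C₀ * h * ((N : ℝ)⁻¹ * ∑ j, ∫ ω, ‖P ω j - Q ω j‖ ^ 2 ∂ℙ)) →
      -- the initial condition
      ∀ ξ : Ω → Fin N → EuclideanSpace ℝ (Fin d), Measurable[ℱ 0] ξ → MemLp ξ 2 ℙ →
      -- the discretization generated by the method
      ∀ Xh : ℕ → Ω → Fin N → EuclideanSpace ℝ (Fin d), Xh 0 = ξ →
        (∀ (k : ℕ), k < M → ∀ (ω : Ω) (i : Fin N),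
          Xh (k + 1) ω i = Ψ i k (Xh k ω i) (Xh k ω) ω) →
      -- the reference adapted square-integrable process
      ∀ X : ℕ → Ω → Fin N → EuclideanSpace ℝ (Fin d),
        (∀ k, k ≤ M → Measurable[ℱ k] (X k)) → (∀ k, k ≤ M → MemLp (X k) 2 ℙ) →
      -- conclusion
      ∀ n, n ≤ M → ∀ i : Fin N,
        ∫ ω, ‖X n ω i - Xh n ω i‖ ^ 2 ∂ℙ
          ≤ Real.exp (C * T) *
            ((⨆ i' : Fin N, ∫ ω, ‖X 0 ω i' - ξ ω i'‖ ^ 2 ∂ℙ)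
              + ∑ k ∈ Finset.Icc 1 M, ⨆ i' : Fin N,
                ((1 + h⁻¹) * ∫ ω, ‖(ℙ[(fun ω' =>
                      X k ω' i' - Ψ i' (k - 1) (X (k - 1) ω' i') (X (k - 1) ω') ω') |
                    ℱ (k - 1)]) ω‖ ^ 2 ∂ℙ
                  + (1 + (η - 1)⁻¹) *
                    ∫ ω, ‖(X k ω i' - Ψ i' (k - 1) (X (k - 1) ω i') (X (k - 1) ω) ω)
                      - (ℙ[(fun ω' =>
                            X k ω' i' - Ψ i' (k - 1) (X (k - 1) ω' i') (X (k - 1) ω') ω') |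
                          ℱ (k - 1)]) ω‖ ^ 2 ∂ℙ)) :=
  c_stable_global_error_bound_general ℙ d T hT C₀ hC₀ η hη
end

section
/- Let d ≥ 1, L_f ∈ ℝ and C_u ≥ 0. There exist constants C > 0 and h₀ ∈ (0,1], depending only on L_f and C_u, such that the following holds: for every N ≥ 1, every odd f : ℝ^d → ℝ^d with ⟨a−b, f(a)−f(b)⟩ ≤ L_f|a−b|² for all a, b, every u : ℝ^d × (ℝ^d)^N → ℝ^d with ⟨x, u(x,z)⟩ ≤ C_u(1 + |x|² + (1/N)∑_{j=1}^N |z_j|²) for all x, z, every h ∈ (0, h₀), and all X, Y ∈ (ℝ^d)^N such that Y is a split-step stage for X (i.e., Y_i = X_i + h((1/N)∑_{j=1}^N f(Y_i − Y_j) + u(Y_i, Y)) for every i), one has the summation relationship: (1/N)∑_{j=1}^N |Y_j|² ≤ C h + (1 + C h)(1/N)∑_{j=1}^N |X_j|². -/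
set_option maxHeartbeats 1000000

open scoped RealInnerProductSpace BigOperators

private lemma split_step_aux_per (d N : ℕ) (h : ℝ)
    (f : EuclideanSpace ℝ (Fin d) → EuclideanSpace ℝ (Fin d))
    (u : EuclideanSpace ℝ (Fin d) → (Fin N → EuclideanSpace ℝ (Fin d)) → EuclideanSpace ℝ (Fin d))
    (X Y : Fin N → EuclideanSpace ℝ (Fin d))
    (hXY : ∀ i, Y i = X i + h • ((N : ℝ)⁻¹ • ∑ j, f (Y i - Y j) + u (Y i) Y)) (i : Fin N) :
    (‖Y i‖^2 - ‖X i‖^2) / 2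
      ≤ h * ((N : ℝ)⁻¹ * ∑ j, ⟪Y i, f (Y i - Y j)⟫ + ⟪Y i, u (Y i) Y⟫) := by
  have hstep : Y i - X i = h • ((N : ℝ)⁻¹ • ∑ j, f (Y i - Y j) + u (Y i) Y) := by
    conv_lhs => rw [hXY i]
    rw [add_sub_cancel_left]
  have hip : ⟪Y i, Y i - X i⟫
      = h * ((N : ℝ)⁻¹ * ∑ j, ⟪Y i, f (Y i - Y j)⟫ + ⟪Y i, u (Y i) Y⟫) := by
    rw [hstep, real_inner_smul_right, inner_add_right, real_inner_smul_right, inner_sum]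
  have hlow : (‖Y i‖^2 - ‖X i‖^2) / 2 ≤ ⟪Y i, Y i - X i⟫ := by
    rw [inner_sub_right, real_inner_self_eq_norm_sq]
    have := real_inner_le_norm (Y i) (X i)
    nlinarith [sq_nonneg (‖Y i‖ - ‖X i‖)]
  linarith [hlow, hip.ge, hip.le]

/-- Summation relationship for the implicit split-step stage.
There exist `C > 0` and `h₀ ∈ (0,1]`, depending only on `L_f` and `C_u`, such that for any
split-step stage `Y` of `X` one has `(1/N)∑‖Y_j‖² ≤ C h + (1 + C h)(1/N)∑‖X_j‖²`. -/
theorem split_step_stage_summation_relationship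
    (d : ℕ) (hd : 1 ≤ d) (Lf Cu : ℝ) (hCu : 0 ≤ Cu) :
    ∃ C h₀ : ℝ, 0 < C ∧ 0 < h₀ ∧ h₀ ≤ 1 ∧
      ∀ N : ℕ, 1 ≤ N →
      ∀ f : EuclideanSpace ℝ (Fin d) → EuclideanSpace ℝ (Fin d),
        (∀ x, f (-x) = - f x) →
        (∀ a b : EuclideanSpace ℝ (Fin d), ⟪a - b, f a - f b⟫ ≤ Lf * ‖a - b‖ ^ 2) →
      ∀ u : EuclideanSpace ℝ (Fin d) → (Fin N → EuclideanSpace ℝ (Fin d)) →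
          EuclideanSpace ℝ (Fin d),
        (∀ (x : EuclideanSpace ℝ (Fin d)) (z : Fin N → EuclideanSpace ℝ (Fin d)),
          ⟪x, u x z⟫ ≤ Cu * (1 + ‖x‖ ^ 2 + (N : ℝ)⁻¹ * ∑ j, ‖z j‖ ^ 2)) →
      ∀ h : ℝ, 0 < h → h < h₀ →
      ∀ X Y : Fin N → EuclideanSpace ℝ (Fin d),
        (∀ i, Y i = X i + h • ((N : ℝ)⁻¹ • ∑ j, f (Y i - Y j) + u (Y i) Y)) →
        (N : ℝ)⁻¹ * ∑ j, ‖Y j‖ ^ 2 ≤ C * h + (1 + C * h) * ((N : ℝ)⁻¹ * ∑ j, ‖X j‖ ^ 2) := by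
  set L := max Lf 0 with hLdef
  have hL0 : 0 ≤ L := le_max_right _ _
  have hLf : Lf ≤ L := le_max_left _ _
  set K := 4*L + 4*Cu with hKdef
  have hK0 : 0 ≤ K := by positivity
  refine ⟨2*K + 2*Cu + 4*K*Cu + 1, min 1 (1/(2*K+1)), by positivity, ?_, min_le_left _ _, ?_⟩
  · have : (0:ℝ) < 1/(2*K+1) := by positivity
    exact lt_min one_pos this
  intro N hN f hodd hf u hu h hh hhlt X Y hXY
  have hN0 : (0:ℝ) < N := by exact_mod_cast hN
  have hh1 : h < 1 := lt_of_lt_of_le hhlt (min_le_left _ _)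
  have hhK : h * (2*K+1) < 1 := by
    have := lt_of_lt_of_le hhlt (min_le_right _ _)
    calc h * (2*K+1) < (1/(2*K+1)) * (2*K+1) := by
          apply mul_lt_mul_of_pos_right this; positivity
      _ = 1 := by field_simp
  set SY := (N : ℝ)⁻¹ * ∑ j, ‖Y j‖ ^ 2 with hSYdef
  set SX := (N : ℝ)⁻¹ * ∑ j, ‖X j‖ ^ 2 with hSXdef
  have hSY0 : 0 ≤ SY := by positivity
  have hSX0 : 0 ≤ SX := by positivity
  clear_value SY SX
  have hsy : ∑ j, ‖Y j‖ ^ 2 = (N:ℝ) * SY := by rw [hSYdef]; field_simp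
  have hsx : ∑ j, ‖X j‖ ^ 2 = (N:ℝ) * SX := by rw [hSXdef]; field_simp
  -- f 0 = 0
  have hf0 : f 0 = 0 := by
    have h1 := hodd 0
    rw [neg_zero] at h1
    have h2 : (2:ℝ) • f 0 = 0 := by
      rw [two_smul]; nth_rewrite 1 [h1]; abel
    simpa using (smul_eq_zero.mp h2).resolve_left (by norm_num)
  -- pointwise: ⟪a, f a⟫ ≤ L ‖a‖²
  have hfa : ∀ a : EuclideanSpace ℝ (Fin d), ⟪a, f a⟫ ≤ L * ‖a‖ ^ 2 := by
    intro a
    have := hf a 0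
    rw [hf0, sub_zero, sub_zero] at this
    calc ⟪a, f a⟫ ≤ Lf * ‖a‖ ^ 2 := this
      _ ≤ L * ‖a‖ ^ 2 := by nlinarith [sq_nonneg ‖a‖]
  -- symmetrization for T
  set T := ∑ i, ∑ j, ⟪Y i, f (Y i - Y j)⟫ with hTdef
  clear_value T
  have hswap : ∑ i, ∑ j, ⟪Y j, f (Y i - Y j)⟫ = -T := by
    have hterm : ∀ i j : Fin N, ⟪Y j, f (Y i - Y j)⟫ = -⟪Y j, f (Y j - Y i)⟫ := by
      intro i j
      have he : Y i - Y j = -(Y j - Y i) := by abel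
      rw [he, hodd, inner_neg_right]
    calc ∑ i, ∑ j, ⟪Y j, f (Y i - Y j)⟫
        = ∑ i, ∑ j, -⟪Y j, f (Y j - Y i)⟫ := by
          exact Finset.sum_congr rfl fun i _ => Finset.sum_congr rfl fun j _ => hterm i j
      _ = -∑ j, ∑ i, ⟪Y j, f (Y j - Y i)⟫ := by
          rw [Finset.sum_comm]; simp
      _ = -T := by rw [hTdef]
  have h2T : 2 * T = ∑ i, ∑ j, ⟪Y i - Y j, f (Y i - Y j)⟫ := by
    have : ∑ i, ∑ j, ⟪Y i - Y j, f (Y i - Y j)⟫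
        = ∑ i, ∑ j, (⟪Y i, f (Y i - Y j)⟫ - ⟪Y j, f (Y i - Y j)⟫) := by
      apply Finset.sum_congr rfl; intro i _
      apply Finset.sum_congr rfl; intro j _
      rw [inner_sub_left]
    rw [this]
    simp only [Finset.sum_sub_distrib]
    rw [hswap, hTdef]
    ring
  have hTbound : T ≤ 2 * L * (N : ℝ) * (N : ℝ) * SY := by
    have hb : ∑ i, ∑ j, ⟪Y i - Y j, f (Y i - Y j)⟫
        ≤ ∑ i : Fin N, ∑ j : Fin N, (2 * L * (‖Y i‖^2 + ‖Y j‖^2)) := by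
      apply Finset.sum_le_sum; intro i _
      apply Finset.sum_le_sum; intro j _
      have h1 := hfa (Y i - Y j)
      have h2 : ‖Y i - Y j‖^2 ≤ 2*(‖Y i‖^2 + ‖Y j‖^2) := by
        have h2a : ‖Y i - Y j‖^2 ≤ (‖Y i‖ + ‖Y j‖)^2 :=
          pow_le_pow_left₀ (norm_nonneg _) (norm_sub_le (Y i) (Y j)) 2
        nlinarith [sq_nonneg (‖Y i‖ - ‖Y j‖)]
      nlinarith [sq_nonneg ‖Y i - Y j‖]
    have hsum : ∑ i : Fin N, ∑ j : Fin N, (2 * L * (‖Y i‖^2 + ‖Y j‖^2))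
        = 4 * L * (N : ℝ) * ∑ j, ‖Y j‖ ^ 2 := by
      have hS : ∀ g : Fin N → ℝ, ∑ i : Fin N, ∑ j : Fin N, (g i + g j)
          = 2*(N:ℝ)*∑ i, g i := by
        intro g
        simp only [Finset.sum_add_distrib, Finset.sum_const, Finset.card_univ,
          Fintype.card_fin, nsmul_eq_mul]
        rw [← Finset.mul_sum]
        ring
      calc ∑ i : Fin N, ∑ j : Fin N, 2*L*(‖Y i‖^2+‖Y j‖^2)
          = 2*L * ∑ i : Fin N, ∑ j : Fin N, (‖Y i‖^2+‖Y j‖^2) := by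
            rw [Finset.mul_sum]
            exact Finset.sum_congr rfl fun i _ => by rw [Finset.mul_sum]
        _ = 4 * L * (N:ℝ) * ∑ j, ‖Y j‖^2 := by rw [hS (fun i => ‖Y i‖^2)]; ring
    rw [← h2T] at hb
    rw [hsum, hsy] at hb
    linarith
  -- per-i inequality
  have hper : ∀ i, (‖Y i‖^2 - ‖X i‖^2) / 2
      ≤ h * ((N : ℝ)⁻¹ * ∑ j, ⟪Y i, f (Y i - Y j)⟫ + ⟪Y i, u (Y i) Y⟫) :=
    split_step_aux_per d N h f u X Y hXY
  -- sum over i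
  have hsumper : ((N:ℝ) * SY - (N:ℝ) * SX) / 2
      ≤ h * ((N : ℝ)⁻¹ * T + ∑ i, ⟪Y i, u (Y i) Y⟫) := by
    have h1 : ∑ i, (‖Y i‖^2 - ‖X i‖^2) / 2
        ≤ ∑ i, h * ((N : ℝ)⁻¹ * ∑ j, ⟪Y i, f (Y i - Y j)⟫ + ⟪Y i, u (Y i) Y⟫) :=
      Finset.sum_le_sum fun i _ => hper i
    have h2 : ∑ i, (‖Y i‖^2 - ‖X i‖^2) / 2 = ((N:ℝ) * SY - (N:ℝ) * SX) / 2 := by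
      rw [← Finset.sum_div, Finset.sum_sub_distrib, hsy, hsx]
    have h3 : ∑ i, h * ((N : ℝ)⁻¹ * ∑ j, ⟪Y i, f (Y i - Y j)⟫ + ⟪Y i, u (Y i) Y⟫)
        = h * ((N : ℝ)⁻¹ * T + ∑ i, ⟪Y i, u (Y i) Y⟫) := by
      rw [← Finset.mul_sum, Finset.sum_add_distrib, ← Finset.mul_sum, ← hTdef]
    rw [h2, h3] at h1
    exact h1
  have husum : ∑ i, ⟪Y i, u (Y i) Y⟫ ≤ Cu * ((N:ℝ) + 2 * (N:ℝ) * SY) := by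
    have h1 : ∑ i, ⟪Y i, u (Y i) Y⟫ ≤ ∑ i : Fin N, Cu * (1 + ‖Y i‖^2 + SY) := by
      apply Finset.sum_le_sum; intro i _
      have := hu (Y i) Y
      rw [← hSYdef] at this
      exact this
    have h2 : ∑ i : Fin N, Cu * (1 + ‖Y i‖^2 + SY)
        = Cu * ((N:ℝ) + (N:ℝ)*SY + (N:ℝ)*SY) := by
      rw [← Finset.mul_sum]
      congr 1
      rw [Finset.sum_add_distrib, Finset.sum_add_distrib]
      simp [hsy, Finset.card_fin]
    rw [h2] at h1
    linarith
  -- key inequality: SY - SX ≤ h * (K * SY + 2 * Cu)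
  have hNinv : (0:ℝ) < (N:ℝ)⁻¹ := by positivity
  have hTN : (N : ℝ)⁻¹ * T ≤ 2 * L * (N : ℝ) * SY := by
    have := mul_le_mul_of_nonneg_left hTbound (le_of_lt hNinv)
    calc (N : ℝ)⁻¹ * T ≤ (N : ℝ)⁻¹ * (2 * L * (N : ℝ) * (N : ℝ) * SY) := this
      _ = 2 * L * (N : ℝ) * SY := by field_simp
  clear * - hsumper husum hTN hN0 hh hh1 hhK hKdef hK0 hL0 hCu hSY0 hSX0
  have hkey : SY - SX ≤ h * (K * SY + 2 * Cu) := by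
    have h1 : ((N:ℝ) * SY - (N:ℝ) * SX) / 2
        ≤ h * (2 * L * (N : ℝ) * SY + Cu * ((N:ℝ) + 2 * (N:ℝ) * SY)) := by
      have hmono : (N : ℝ)⁻¹ * T + ∑ i, ⟪Y i, u (Y i) Y⟫
          ≤ 2 * L * (N : ℝ) * SY + Cu * ((N:ℝ) + 2 * (N:ℝ) * SY) := by linarith
      calc ((N:ℝ) * SY - (N:ℝ) * SX) / 2 ≤ h * ((N : ℝ)⁻¹ * T + ∑ i, ⟪Y i, u (Y i) Y⟫) := hsumper
        _ ≤ _ := by apply mul_le_mul_of_nonneg_left hmono (le_of_lt hh)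
    have h2 : (N:ℝ) * (SY - SX) ≤ (N:ℝ) * (h * (K * SY + 2 * Cu)) := by
      clear * - h1 hKdef
      rw [hKdef]
      ring_nf at h1 ⊢
      linarith
    exact le_of_mul_le_mul_left h2 hN0
  -- conclude
  clear * - hkey hSX0 hSY0 hh hh1 hhK hK0 hCu hL0
  nlinarith [hkey, hSX0, hSY0, mul_nonneg (le_of_lt hh) hK0,
    mul_nonneg (mul_nonneg (le_of_lt hh) hK0) hSY0,
    mul_nonneg (mul_nonneg (le_of_lt hh) hK0) hSX0,
    mul_nonneg hCu (le_of_lt hh), mul_pos hh hh,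
    mul_nonneg (mul_nonneg (le_of_lt hh) hCu) hK0]
end

section
/- Let d, N ≥ 1 and L_f, L_u ∈ ℝ. Let f : ℝ^d → ℝ^d satisfy ⟨a−b, f(a)−f(b)⟩ ≤ L_f|a−b|² for all a, b, and let u : ℝ^d × (ℝ^d)^N → ℝ^d satisfy ⟨x−x', u(x,z)−u(x',z)⟩ ≤ L_u|x−x'|² for all x, x' ∈ ℝ^d and z ∈ (ℝ^d)^N. Let h > 0 with 2(L_f + L_u)h < 1, and let X, Y ∈ (ℝ^d)^N be such that Y is a split-step stage for X (Y_i = X_i + h((1/N)∑_{k=1}^N f(Y_i − Y_k) + u(Y_i, Y)) for every i). Then for all i, j ∈ {1,…,N}: |Y_i − Y_j|² ≤ (1 − 2(L_f + L_u)h)^{−1} |X_i − X_j|². -/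
open scoped RealInnerProductSpace BigOperators

/-- Difference relationship for the implicit split-step stage.
If `Y` is a split-step stage for `X` with `2(L_f + L_u) h < 1`, then for all `i, j`:
`‖Y_i − Y_j‖² ≤ (1 − 2(L_f + L_u)h)⁻¹ ‖X_i − X_j‖²`. -/
theorem split_step_stage_difference_relationship
    (d N : ℕ) (hd : 1 ≤ d) (hN : 1 ≤ N) (Lf Lu : ℝ)
    (f : EuclideanSpace ℝ (Fin d) → EuclideanSpace ℝ (Fin d))
    (hf : ∀ a b : EuclideanSpace ℝ (Fin d), ⟪a - b, f a - f b⟫ ≤ Lf * ‖a - b‖ ^ 2)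
    (u : EuclideanSpace ℝ (Fin d) → (Fin N → EuclideanSpace ℝ (Fin d)) →
      EuclideanSpace ℝ (Fin d))
    (hu : ∀ (x x' : EuclideanSpace ℝ (Fin d)) (z : Fin N → EuclideanSpace ℝ (Fin d)),
      ⟪x - x', u x z - u x' z⟫ ≤ Lu * ‖x - x'‖ ^ 2)
    (h : ℝ) (hh : 0 < h) (hsmall : 2 * (Lf + Lu) * h < 1)
    (X Y : Fin N → EuclideanSpace ℝ (Fin d))
    (hY : ∀ i, Y i = X i + h • ((N : ℝ)⁻¹ • ∑ k, f (Y i - Y k) + u (Y i) Y)) :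
    ∀ i j, ‖Y i - Y j‖ ^ 2 ≤ (1 - 2 * (Lf + Lu) * h)⁻¹ * ‖X i - X j‖ ^ 2 := by
  intro i j
  set D : EuclideanSpace ℝ (Fin d) := Y i - Y j with hDdef
  set E : EuclideanSpace ℝ (Fin d) := X i - X j with hEdef
  have hpos : 0 < 1 - 2 * (Lf + Lu) * h := by linarith
  have hNpos : (0:ℝ) < (N:ℝ) := by exact_mod_cast Nat.lt_of_lt_of_le Nat.zero_lt_one hN
  set S : EuclideanSpace ℝ (Fin d) :=
    (N:ℝ)⁻¹ • ∑ k, (f (Y i - Y k) - f (Y j - Y k)) + (u (Y i) Y - u (Y j) Y) with hSdef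
  have hD : D = E + h • S := by
    rw [hDdef, hEdef, hSdef]
    conv_lhs => rw [hY i, hY j]
    rw [Finset.sum_sub_distrib]
    module
  have key : ⟪D, S⟫ ≤ (Lf + Lu) * ‖D‖ ^ 2 := by
    rw [hSdef, inner_add_right, real_inner_smul_right, inner_sum]
    have h1 : ∑ k, ⟪D, f (Y i - Y k) - f (Y j - Y k)⟫ ≤ (N:ℝ) * (Lf * ‖D‖ ^ 2) := by
      calc ∑ k, ⟪D, f (Y i - Y k) - f (Y j - Y k)⟫
          ≤ ∑ _k : Fin N, Lf * ‖D‖ ^ 2 := by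
            refine Finset.sum_le_sum fun k _ => ?_
            have t1 := hf (Y i - Y k) (Y j - Y k)
            rw [sub_sub_sub_cancel_right] at t1
            rw [hDdef]; exact t1
        _ = (N:ℝ) * (Lf * ‖D‖ ^ 2) := by
            simp [Finset.sum_const, mul_comm]
    have h2 : ⟪D, u (Y i) Y - u (Y j) Y⟫ ≤ Lu * ‖D‖ ^ 2 := hu (Y i) (Y j) Y
    have hkey := mul_le_mul_of_nonneg_left h1 (le_of_lt (inv_pos.mpr hNpos))
    have hNinv : (N:ℝ)⁻¹ * ((N:ℝ) * (Lf * ‖D‖ ^ 2)) = Lf * ‖D‖ ^ 2 := by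
      field_simp
    linarith [hkey, hNinv.le]
  have hDD : ‖D‖ ^ 2 = ⟪D, E⟫ + h * ⟪D, S⟫ := by
    have e : ⟪D, D⟫ = ⟪D, E + h • S⟫ := by rw [← hD]
    rw [← real_inner_self_eq_norm_sq, e, inner_add_right, real_inner_smul_right]
  have hDE : ⟪D, E⟫ ≤ (‖D‖ ^ 2 + ‖E‖ ^ 2) / 2 := by
    have h1 := real_inner_le_norm D E
    nlinarith [sq_nonneg (‖D‖ - ‖E‖)]
  have hmain : (1 - 2 * (Lf + Lu) * h) * ‖D‖ ^ 2 ≤ ‖E‖ ^ 2 := by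
    nlinarith [mul_le_mul_of_nonneg_left key (le_of_lt hh)]
  rw [inv_mul_eq_div, le_div_iff₀ hpos]
  linarith [hmain]
end

section
/- Let d ≥ 1, p ≥ 1 real, L_f ∈ ℝ, L_u ∈ ℝ, C_u ≥ 0. There exist constants C > 0 and h₀ ∈ (0,1], depending only on p, L_f, L_u and C_u (in particular independent of N and d), such that the following pathwise moment relationship holds: for every N ≥ 1, every odd f : ℝ^d → ℝ^d with ⟨a−b, f(a)−f(b)⟩ ≤ L_f|a−b|², every u : ℝ^d × (ℝ^d)^N → ℝ^d with ⟨x−x', u(x,z)−u(x',z)⟩ ≤ L_u|x−x'|² and ⟨x, u(x,z)⟩ ≤ C_u(1 + |x|² + (1/N)∑_j|z_j|²), every h ∈ (0,h₀), and all X, Y ∈ (ℝ^d)^N with Y a split-step stage for X, one has for every i ∈ {1,…,N}: |Y_i|^{2p} ≤ C( (1/N)∑_{j=1}^N |X_i − X_j|^{2p} + ((1/N)∑_{j=1}^N (1 + |X_j|²))^p + 1 ). -/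
open scoped RealInnerProductSpace BigOperators

/-!
Testing `Y_i - Y_j` against the stage equation and using the one-sided Lipschitz bounds on `f`
and `u`, a small step `h` gives `|Y_i - Y_j| ≤ 2 |X_i - X_j|`. Summing the stage equation tested
against `Y_i` over `i`, the oddness of `f` symmetrises the interaction term into
`∑_{i,k} ⟨Y_i - Y_k, f (Y_i - Y_k)⟩ / 2`, which the pairwise bound controls by `∑ |X_j|²`; with
the growth bound on `u` this gives `∑ |Y_j|² ≤ 6 ∑ (1 + |X_j|²)`. Writing
`|Y_i| ≤ |Y_i - Y_j| + |Y_j|` and averaging over `j` then bounds `|Y_i|²`, and Jensen's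
inequality turns this second-moment bound into the `2p`-th moment bound.
-/

open Finset

variable {E : Type*} [NormedAddCommGroup E] [InnerProductSpace ℝ E] {ι : Type*} [Fintype ι]

def OneSidedLipschitz (L : ℝ) (f : E → E) : Prop :=
  ∀ a b, ⟪a - b, f a - f b⟫ ≤ L * ‖a - b‖ ^ 2

lemma OneSidedLipschitz.mono {L L' : ℝ} {f : E → E} (hf : OneSidedLipschitz L f)
    (hLL' : L ≤ L') : OneSidedLipschitz L' f := fun a b =>
  (hf a b).trans (mul_le_mul_of_nonneg_right hLL' (sq_nonneg _))

lemma OneSidedLipschitz.inner_self_le {L : ℝ} {f : E → E} (hf : OneSidedLipschitz L f)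
    (hodd : f.Odd) (x : E) : ⟪x, f x⟫ ≤ L * ‖x‖ ^ 2 := by
  have h0 : f 0 = 0 := by simpa [eq_neg_iff_add_eq_zero, ← two_smul ℝ] using hodd 0
  simpa [h0] using hf x 0

lemma norm_add_sq_le_two_mul {F : Type*} [SeminormedAddCommGroup F] (a b : F) :
    ‖a + b‖ ^ 2 ≤ 2 * (‖a‖ ^ 2 + ‖b‖ ^ 2) :=
  (pow_le_pow_left₀ (norm_nonneg _) (norm_add_le a b) 2).trans add_sq_le

lemma norm_le_two_mul_of_sq_le_inner_add_half {v w : E}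
    (h : ‖v‖ ^ 2 ≤ ⟪v, w⟫ + ‖v‖ ^ 2 / 2) : ‖v‖ ≤ 2 * ‖w‖ := by
  nlinarith [real_inner_le_norm v w, norm_nonneg v, norm_nonneg w]

namespace Real

lemma rpow_add_le_mul_rpow_add_rpow {a b p : ℝ} (ha : 0 ≤ a) (hb : 0 ≤ b) (hp : 1 ≤ p) :
    (a + b) ^ p ≤ 2 ^ (p - 1) * (a ^ p + b ^ p) := by
  lift a to NNReal using ha
  lift b to NNReal using hb
  exact_mod_cast NNReal.rpow_add_le_mul_rpow_add_rpow a b hp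

end Real

section Mean

variable [Nonempty ι]

lemma inv_card_mul_sum_const (c : ℝ) : (Fintype.card ι : ℝ)⁻¹ * ∑ _k : ι, c = c := by
  rw [sum_const, card_univ, nsmul_eq_mul, inv_mul_cancel_left₀ (by positivity)]

lemma inv_card_mul_sum_le {a : ι → ℝ} {c : ℝ} (h : ∀ k, a k ≤ c) :
    (Fintype.card ι : ℝ)⁻¹ * ∑ k, a k ≤ c :=
  calc (Fintype.card ι : ℝ)⁻¹ * ∑ k, a k ≤ (Fintype.card ι : ℝ)⁻¹ * ∑ _k : ι, c := by
        gcongr with k; exact h k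
    _ = c := inv_card_mul_sum_const c

lemma rpow_inv_card_mul_sum_le {p : ℝ} (hp : 1 ≤ p) {a : ι → ℝ} (ha : ∀ k, 0 ≤ a k) :
    ((Fintype.card ι : ℝ)⁻¹ * ∑ k, a k) ^ p ≤ (Fintype.card ι : ℝ)⁻¹ * ∑ k, a k ^ p := by
  simpa only [mul_sum] using Real.rpow_arith_mean_le_arith_mean_rpow univ
    (fun _ => (Fintype.card ι : ℝ)⁻¹) a (fun _ _ => by positivity)
    (by simp) (fun k _ => ha k) hp

end Mean

lemma sum_sum_sq_norm_sub_le {F : Type*} [SeminormedAddCommGroup F] (X : ι → F) :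
    ∑ i, ∑ k, ‖X i - X k‖ ^ 2 ≤ 4 * Fintype.card ι * ∑ j, ‖X j‖ ^ 2 :=
  calc ∑ i, ∑ k, ‖X i - X k‖ ^ 2 ≤ ∑ i, ∑ k, 2 * (‖X i‖ ^ 2 + ‖X k‖ ^ 2) := by
        gcongr with i _ k _
        simpa [sub_eq_add_neg] using norm_add_sq_le_two_mul (X i) (-X k)
    _ = 4 * Fintype.card ι * ∑ j, ‖X j‖ ^ 2 := by
        simp only [mul_add, sum_add_distrib, sum_const, card_univ, nsmul_eq_mul, ← mul_sum]
        ring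

lemma two_mul_sum_sum_inner_of_odd {f : E → E} (hodd : f.Odd) (Y : ι → E) :
    2 * ∑ i, ∑ k, ⟪Y i, f (Y i - Y k)⟫ = ∑ i, ∑ k, ⟪Y i - Y k, f (Y i - Y k)⟫ := by
  rw [two_mul]
  nth_rewrite 2 [sum_comm]
  simp only [← sum_add_distrib]
  refine sum_congr rfl fun i _ => sum_congr rfl fun k _ => ?_
  rw [← neg_sub (Y i) (Y k), hodd, inner_neg_right, inner_sub_left]
  ring

lemma sum_inner_apply_le [Nonempty ι] {Cu : ℝ} {u : E → (ι → E) → E}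
    (hug : ∀ x z, ⟪x, u x z⟫ ≤ Cu * (1 + ‖x‖ ^ 2 + (Fintype.card ι : ℝ)⁻¹ * ∑ j, ‖z j‖ ^ 2))
    (Y : ι → E) :
    ∑ i, ⟪Y i, u (Y i) Y⟫ ≤ Cu * (Fintype.card ι + 2 * ∑ j, ‖Y j‖ ^ 2) :=
  calc ∑ i, ⟪Y i, u (Y i) Y⟫
      ≤ ∑ i, Cu * (1 + ‖Y i‖ ^ 2 + (Fintype.card ι : ℝ)⁻¹ * ∑ j, ‖Y j‖ ^ 2) :=
        sum_le_sum fun i _ => hug (Y i) Y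
    _ = Cu * (Fintype.card ι + 2 * ∑ j, ‖Y j‖ ^ 2) := by
        simp only [← mul_sum, sum_add_distrib, sum_const, card_univ, nsmul_eq_mul]
        field_simp
        ring

lemma rpow_two_mul_le_of_sq_le [Nonempty ι] {p c b y : ℝ} {a : ι → ℝ} (hp : 1 ≤ p) (hc : 0 ≤ c)
    (hb : 0 ≤ b) (hy : 0 ≤ y) (ha : ∀ j, 0 ≤ a j)
    (h : y ^ 2 ≤ c * ((Fintype.card ι : ℝ)⁻¹ * ∑ j, a j ^ 2 + b)) :
    y ^ (2 * p) ≤ c ^ p * 2 ^ (p - 1) * ((Fintype.card ι : ℝ)⁻¹ * ∑ j, a j ^ (2 * p) + b ^ p) := by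
  have sq_rpow : ∀ {x : ℝ}, 0 ≤ x → (x ^ 2) ^ p = x ^ (2 * p) := fun hx => by
    rw [Real.rpow_mul hx, Real.rpow_two]
  have hmean : 0 ≤ (Fintype.card ι : ℝ)⁻¹ * ∑ j, a j ^ 2 := by positivity
  calc y ^ (2 * p) = (y ^ 2) ^ p := (sq_rpow hy).symm
    _ ≤ (c * ((Fintype.card ι : ℝ)⁻¹ * ∑ j, a j ^ 2 + b)) ^ p := by gcongr
    _ = c ^ p * ((Fintype.card ι : ℝ)⁻¹ * ∑ j, a j ^ 2 + b) ^ p := Real.mul_rpow hc (by positivity)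
    _ ≤ c ^ p * (2 ^ (p - 1) * (((Fintype.card ι : ℝ)⁻¹ * ∑ j, a j ^ 2) ^ p + b ^ p)) := by
        gcongr; exact Real.rpow_add_le_mul_rpow_add_rpow hmean hb hp
    _ ≤ c ^ p * (2 ^ (p - 1) * ((Fintype.card ι : ℝ)⁻¹ * ∑ j, (a j ^ 2) ^ p + b ^ p)) := by
        gcongr; exact rpow_inv_card_mul_sum_le hp fun j => sq_nonneg _
    _ = c ^ p * 2 ^ (p - 1) * ((Fintype.card ι : ℝ)⁻¹ * ∑ j, a j ^ (2 * p) + b ^ p) := by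
        simp only [sq_rpow (ha _)]
        ring

def IsSplitStepStage (f : E → E) (u : E → (ι → E) → E) (h : ℝ) (X Y : ι → E) : Prop :=
  ∀ i, Y i = X i + h • ((Fintype.card ι : ℝ)⁻¹ • ∑ j, f (Y i - Y j) + u (Y i) Y)

namespace IsSplitStepStage

variable {f : E → E} {u : E → (ι → E) → E} {h Lf Lu Cu : ℝ} {X Y : ι → E}

lemma inner_eq (hY : IsSplitStepStage f u h X Y) (v : E) (i : ι) :
    ⟪v, Y i⟫ = ⟪v, X i⟫ +
      h * ((Fintype.card ι : ℝ)⁻¹ * ∑ k, ⟪v, f (Y i - Y k)⟫ + ⟪v, u (Y i) Y⟫) := by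
  conv_lhs => rw [hY i]
  simp only [inner_add_right, real_inner_smul_right, inner_sum]

lemma norm_sub_le (hY : IsSplitStepStage f u h X Y) (hf : OneSidedLipschitz Lf f)
    (hu : ∀ z, OneSidedLipschitz Lu (u · z)) (hh : 0 ≤ h) (hsmall : h * (Lf + Lu) ≤ 1 / 2)
    (i j : ι) : ‖Y i - Y j‖ ≤ 2 * ‖X i - X j‖ := by
  have : Nonempty ι := ⟨i⟩
  set v := Y i - Y j with hv
  have hexp : ‖v‖ ^ 2 = ⟪v, X i - X j⟫ + h * ((Fintype.card ι : ℝ)⁻¹ *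
      ∑ k, ⟪v, f (Y i - Y k) - f (Y j - Y k)⟫ + ⟪v, u (Y i) Y - u (Y j) Y⟫) := by
    rw [← real_inner_self_eq_norm_sq]
    nth_rw 2 [hv]
    simp only [inner_sub_right, hY.inner_eq v, sum_sub_distrib]
    ring
  have hint : (Fintype.card ι : ℝ)⁻¹ * ∑ k, ⟪v, f (Y i - Y k) - f (Y j - Y k)⟫ ≤ Lf * ‖v‖ ^ 2 :=
    inv_card_mul_sum_le fun k => by simpa [v] using hf (Y i - Y k) (Y j - Y k)
  refine norm_le_two_mul_of_sq_le_inner_add_half ?_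
  calc ‖v‖ ^ 2 = _ := hexp
    _ ≤ ⟪v, X i - X j⟫ + h * (Lf + Lu) * ‖v‖ ^ 2 := by
        have := mul_le_mul_of_nonneg_left (add_le_add hint (hu Y (Y i) (Y j))) hh
        linarith
    _ ≤ ⟪v, X i - X j⟫ + ‖v‖ ^ 2 / 2 := by
        linarith [mul_le_mul_of_nonneg_right hsmall (sq_nonneg ‖v‖)]

lemma sum_sq_norm_eq (hY : IsSplitStepStage f u h X Y) :
    ∑ i, ‖Y i‖ ^ 2 = ∑ i, ⟪Y i, X i⟫ + h * ((Fintype.card ι : ℝ)⁻¹ *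
      ∑ i, ∑ k, ⟪Y i, f (Y i - Y k)⟫ + ∑ i, ⟪Y i, u (Y i) Y⟫) := by
  simp only [← real_inner_self_eq_norm_sq, hY.inner_eq _ _, sum_add_distrib, ← mul_sum]

lemma sum_sum_inner_le (hY : IsSplitStepStage f u h X Y) (hodd : f.Odd)
    (hf : OneSidedLipschitz Lf f) (hLf : 0 ≤ Lf) (hu : ∀ z, OneSidedLipschitz Lu (u · z))
    (hh : 0 ≤ h) (hsmall : h * (Lf + Lu) ≤ 1 / 2) :
    ∑ i, ∑ k, ⟪Y i, f (Y i - Y k)⟫ ≤ 8 * Lf * Fintype.card ι * ∑ j, ‖X j‖ ^ 2 := by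
  have hpair (i k : ι) : ⟪Y i - Y k, f (Y i - Y k)⟫ ≤ 4 * Lf * ‖X i - X k‖ ^ 2 :=
    calc ⟪Y i - Y k, f (Y i - Y k)⟫ ≤ Lf * ‖Y i - Y k‖ ^ 2 := hf.inner_self_le hodd _
      _ ≤ Lf * (2 * ‖X i - X k‖) ^ 2 := by gcongr; exact hY.norm_sub_le hf hu hh hsmall i k
      _ = 4 * Lf * ‖X i - X k‖ ^ 2 := by ring
  have := calc 2 * ∑ i, ∑ k, ⟪Y i, f (Y i - Y k)⟫
      = ∑ i, ∑ k, ⟪Y i - Y k, f (Y i - Y k)⟫ := two_mul_sum_sum_inner_of_odd hodd Y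
    _ ≤ ∑ i, ∑ k, 4 * Lf * ‖X i - X k‖ ^ 2 := by gcongr with i _ k _; exact hpair i k
    _ = 4 * Lf * ∑ i, ∑ k, ‖X i - X k‖ ^ 2 := by simp only [mul_sum]
    _ ≤ 4 * Lf * (4 * Fintype.card ι * ∑ j, ‖X j‖ ^ 2) := by
        gcongr; exact sum_sum_sq_norm_sub_le X
  linarith

lemma sum_sq_norm_le [Nonempty ι] (hY : IsSplitStepStage f u h X Y) (hodd : f.Odd)
    (hf : OneSidedLipschitz Lf f) (hLf : 0 ≤ Lf) (hu : ∀ z, OneSidedLipschitz Lu (u · z))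
    (hug : ∀ x z, ⟪x, u x z⟫ ≤ Cu * (1 + ‖x‖ ^ 2 + (Fintype.card ι : ℝ)⁻¹ * ∑ j, ‖z j‖ ^ 2))
    (hh : 0 ≤ h) (hsmall : h * (Lf + Lu) ≤ 1 / 2) (hhLf : h * Lf ≤ 1 / 8) (hhCu : h * Cu ≤ 1 / 8) :
    ∑ j, ‖Y j‖ ^ 2 ≤ 6 * ∑ j, (1 + ‖X j‖ ^ 2) := by
  have hcross : ∑ i, ⟪Y i, X i⟫ ≤ (∑ j, ‖Y j‖ ^ 2) / 2 + (∑ j, ‖X j‖ ^ 2) / 2 := by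
    rw [sum_div, sum_div, ← sum_add_distrib]
    gcongr with i
    nlinarith [real_inner_le_norm (Y i) (X i), sq_nonneg (‖Y i‖ - ‖X i‖)]
  have hinter : h * ((Fintype.card ι : ℝ)⁻¹ * ∑ i, ∑ k, ⟪Y i, f (Y i - Y k)⟫) ≤
      ∑ j, ‖X j‖ ^ 2 :=
    calc h * ((Fintype.card ι : ℝ)⁻¹ * ∑ i, ∑ k, ⟪Y i, f (Y i - Y k)⟫)
        ≤ h * ((Fintype.card ι : ℝ)⁻¹ * (8 * Lf * Fintype.card ι * ∑ j, ‖X j‖ ^ 2)) := by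
          gcongr; exact hY.sum_sum_inner_le hodd hf hLf hu hh hsmall
      _ = 8 * (h * Lf) * ∑ j, ‖X j‖ ^ 2 := by field_simp
      _ ≤ 8 * (1 / 8) * ∑ j, ‖X j‖ ^ 2 := by gcongr
      _ = ∑ j, ‖X j‖ ^ 2 := by ring
  have hdrift : h * ∑ i, ⟪Y i, u (Y i) Y⟫ ≤ Fintype.card ι / 8 + (∑ j, ‖Y j‖ ^ 2) / 4 :=
    calc h * ∑ i, ⟪Y i, u (Y i) Y⟫ ≤ h * (Cu * (Fintype.card ι + 2 * ∑ j, ‖Y j‖ ^ 2)) := by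
          gcongr; exact sum_inner_apply_le hug Y
      _ = h * Cu * (Fintype.card ι + 2 * ∑ j, ‖Y j‖ ^ 2) := by ring
      _ ≤ 1 / 8 * (Fintype.card ι + 2 * ∑ j, ‖Y j‖ ^ 2) := by gcongr
      _ = Fintype.card ι / 8 + (∑ j, ‖Y j‖ ^ 2) / 4 := by ring
  have hconst : ∑ j, (1 + ‖X j‖ ^ 2) = Fintype.card ι + ∑ j, ‖X j‖ ^ 2 := by
    simp [sum_add_distrib]
  have := hY.sum_sq_norm_eq
  rw [mul_add] at this
  linarith

lemma sq_norm_le [Nonempty ι] (hY : IsSplitStepStage f u h X Y) (hodd : f.Odd)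
    (hf : OneSidedLipschitz Lf f) (hLf : 0 ≤ Lf) (hu : ∀ z, OneSidedLipschitz Lu (u · z))
    (hug : ∀ x z, ⟪x, u x z⟫ ≤ Cu * (1 + ‖x‖ ^ 2 + (Fintype.card ι : ℝ)⁻¹ * ∑ j, ‖z j‖ ^ 2))
    (hh : 0 ≤ h) (hsmall : h * (Lf + Lu) ≤ 1 / 2) (hhLf : h * Lf ≤ 1 / 8) (hhCu : h * Cu ≤ 1 / 8)
    (i : ι) :
    ‖Y i‖ ^ 2 ≤ 12 * ((Fintype.card ι : ℝ)⁻¹ * ∑ j, ‖X i - X j‖ ^ 2 +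
      (Fintype.card ι : ℝ)⁻¹ * ∑ j, (1 + ‖X j‖ ^ 2)) := by
  have hj (j : ι) : ‖Y i‖ ^ 2 ≤ 8 * ‖X i - X j‖ ^ 2 + 2 * ‖Y j‖ ^ 2 :=
    calc ‖Y i‖ ^ 2 = ‖(Y i - Y j) + Y j‖ ^ 2 := by rw [sub_add_cancel]
      _ ≤ 2 * (‖Y i - Y j‖ ^ 2 + ‖Y j‖ ^ 2) := norm_add_sq_le_two_mul _ _
      _ ≤ 2 * ((2 * ‖X i - X j‖) ^ 2 + ‖Y j‖ ^ 2) := by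
          gcongr; exact hY.norm_sub_le hf hu hh hsmall i j
      _ = 8 * ‖X i - X j‖ ^ 2 + 2 * ‖Y j‖ ^ 2 := by ring
  have hdiff : 0 ≤ (Fintype.card ι : ℝ)⁻¹ * ∑ j, ‖X i - X j‖ ^ 2 := by positivity
  calc ‖Y i‖ ^ 2 = (Fintype.card ι : ℝ)⁻¹ * ∑ _j : ι, ‖Y i‖ ^ 2 :=
        (inv_card_mul_sum_const _).symm
    _ ≤ (Fintype.card ι : ℝ)⁻¹ * ∑ j, (8 * ‖X i - X j‖ ^ 2 + 2 * ‖Y j‖ ^ 2) := by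
        gcongr with j; exact hj j
    _ = 8 * ((Fintype.card ι : ℝ)⁻¹ * ∑ j, ‖X i - X j‖ ^ 2) +
          2 * ((Fintype.card ι : ℝ)⁻¹ * ∑ j, ‖Y j‖ ^ 2) := by
        rw [sum_add_distrib, ← mul_sum, ← mul_sum]; ring
    _ ≤ 8 * ((Fintype.card ι : ℝ)⁻¹ * ∑ j, ‖X i - X j‖ ^ 2) +
          2 * ((Fintype.card ι : ℝ)⁻¹ * (6 * ∑ j, (1 + ‖X j‖ ^ 2))) := by
        gcongr; exact hY.sum_sq_norm_le hodd hf hLf hu hug hh hsmall hhLf hhCu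
    _ ≤ _ := by linarith

end IsSplitStepStage

/-- Moment relationship for the implicit split-step stage.
There are `C > 0` and `h₀ ∈ (0,1]`, depending only on `p, L_f, L_u, C_u` (in particular
independent of `N` and `d`), such that for any split-step stage `Y` of `X`,
`‖Y_i‖^{2p} ≤ C((1/N)∑_j ‖X_i − X_j‖^{2p} + ((1/N)∑_j (1 + ‖X_j‖²))^p + 1)`.
Real exponents denote real (rpow) powers. -/
theorem split_step_stage_moment_relationship
    (p : ℝ) (hp : 1 ≤ p) (Lf Lu Cu : ℝ) (hCu : 0 ≤ Cu) :
    ∃ C h₀ : ℝ, 0 < C ∧ 0 < h₀ ∧ h₀ ≤ 1 ∧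
      ∀ d N : ℕ, 1 ≤ d → 1 ≤ N →
      ∀ f : EuclideanSpace ℝ (Fin d) → EuclideanSpace ℝ (Fin d),
        (∀ x, f (-x) = - f x) →
        (∀ a b : EuclideanSpace ℝ (Fin d), ⟪a - b, f a - f b⟫ ≤ Lf * ‖a - b‖ ^ 2) →
      ∀ u : EuclideanSpace ℝ (Fin d) → (Fin N → EuclideanSpace ℝ (Fin d)) →
          EuclideanSpace ℝ (Fin d),
        (∀ (x x' : EuclideanSpace ℝ (Fin d)) (z : Fin N → EuclideanSpace ℝ (Fin d)),
          ⟪x - x', u x z - u x' z⟫ ≤ Lu * ‖x - x'‖ ^ 2) →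
        (∀ (x : EuclideanSpace ℝ (Fin d)) (z : Fin N → EuclideanSpace ℝ (Fin d)),
          ⟪x, u x z⟫ ≤ Cu * (1 + ‖x‖ ^ 2 + (N : ℝ)⁻¹ * ∑ j, ‖z j‖ ^ 2)) →
      ∀ h : ℝ, 0 < h → h < h₀ →
      ∀ X Y : Fin N → EuclideanSpace ℝ (Fin d),
        (∀ i, Y i = X i + h • ((N : ℝ)⁻¹ • ∑ j, f (Y i - Y j) + u (Y i) Y)) →
        ∀ i, ‖Y i‖ ^ (2 * p) ≤
          C * ((N : ℝ)⁻¹ * ∑ j, ‖X i - X j‖ ^ (2 * p)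
            + ((N : ℝ)⁻¹ * ∑ j, (1 + ‖X j‖ ^ 2)) ^ p + 1) := by
  have hK : 1 ≤ |Lf| + |Lu| + Cu + 1 := by linarith [abs_nonneg Lf, abs_nonneg Lu]
  refine ⟨12 ^ p * 2 ^ (p - 1), 1 / (8 * (|Lf| + |Lu| + Cu + 1)), by positivity, by positivity,
    by rw [div_le_one (by positivity)]; linarith, ?_⟩
  intro d N _ hN f hodd hf u hu hug h hh hh₀ X Y hY i
  have : Nonempty (Fin N) := ⟨⟨0, hN⟩⟩
  have hsmall : ∀ c ≤ |Lf| + |Lu| + Cu + 1, h * c ≤ 1 / 8 := fun c hc => by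
    rw [lt_div_iff₀ (by positivity)] at hh₀
    nlinarith
  have hY' : IsSplitStepStage f u h X Y := by simpa only [IsSplitStepStage, Fintype.card_fin]
  have hf' : OneSidedLipschitz |Lf| f := OneSidedLipschitz.mono hf (le_abs_self Lf)
  have hu' (z : Fin N → EuclideanSpace ℝ (Fin d)) : OneSidedLipschitz |Lu| (u · z) :=
    OneSidedLipschitz.mono (fun x x' => hu x x' z) (le_abs_self Lu)
  have hsq := hY'.sq_norm_le hodd hf' (abs_nonneg Lf) hu' (by simpa only [Fintype.card_fin]) hh.le
    ((hsmall _ (by linarith)).trans (by norm_num)) (hsmall _ (by linarith [abs_nonneg Lu]))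
    (hsmall _ (by linarith [abs_nonneg Lf, abs_nonneg Lu])) i
  have hmom := rpow_two_mul_le_of_sq_le hp (by norm_num)
    (mul_nonneg (by positivity) (sum_nonneg fun j _ => by positivity)) (norm_nonneg _)
    (fun j => norm_nonneg _) hsq
  simp only [Fintype.card_fin] at hmom
  exact hmom.trans (mul_le_mul_of_nonneg_left (le_add_of_nonneg_right zero_le_one) (by positivity))
end

section
/- Let d, N ≥ 1, L_f ∈ ℝ, L₁ ∈ ℝ, L₂ ≥ 0. Let f : ℝ^d → ℝ^d be odd with ⟨a−b, f(a)−f(b)⟩ ≤ L_f|a−b|² for all a, b, and let u : ℝ^d × (ℝ^d)^N → ℝ^d satisfy ⟨x−x', u(x,z)−u(x',z')⟩ ≤ L₁|x−x'|² + L₂(1/N)∑_{j=1}^N|z_j−z'_j|² for all x, x', z, z'. Let h > 0 satisfy h(4·max(L_f,0) + 2L₁ + 2L₂) < 1. Suppose X, Z, Y^X, Y^Z ∈ (ℝ^d)^N satisfy, for every i, Y^X_i = X_i + h((1/N)∑_j f(Y^X_i − Y^X_j) + u(Y^X_i, Y^X)) and Y^Z_i = Z_i + h((1/N)∑_j f(Y^Z_i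 − Y^Z_j) + u(Y^Z_i, Y^Z)). Then: (1 − h(4·max(L_f,0) + 2L₁ + 2L₂)) ∑_{i=1}^N |Y^X_i − Y^Z_i|² ≤ ∑_{i=1}^N |X_i − Z_i|². -/
open scoped RealInnerProductSpace BigOperators

/-- Deterministic contraction of the implicit split-step stage applied
to two inputs `X` and `Z`:
`(1 − h(4 max(L_f,0) + 2L₁ + 2L₂)) ∑ ‖Y^X_i − Y^Z_i‖² ≤ ∑ ‖X_i − Z_i‖²`. -/
theorem split_step_stage_two_input_contraction
    (d N : ℕ) (hd : 1 ≤ d) (hN : 1 ≤ N) (Lf L1 L2 : ℝ) (hL2 : 0 ≤ L2)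
    (f : EuclideanSpace ℝ (Fin d) → EuclideanSpace ℝ (Fin d))
    (hodd : ∀ x, f (-x) = - f x)
    (hf : ∀ a b : EuclideanSpace ℝ (Fin d), ⟪a - b, f a - f b⟫ ≤ Lf * ‖a - b‖ ^ 2)
    (u : EuclideanSpace ℝ (Fin d) → (Fin N → EuclideanSpace ℝ (Fin d)) →
      EuclideanSpace ℝ (Fin d))
    (hu : ∀ (x x' : EuclideanSpace ℝ (Fin d)) (z z' : Fin N → EuclideanSpace ℝ (Fin d)),
      ⟪x - x', u x z - u x' z'⟫ ≤ L1 * ‖x - x'‖ ^ 2 + L2 * ((N : ℝ)⁻¹ * ∑ j, ‖z j - z' j‖ ^ 2))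
    (h : ℝ) (hh : 0 < h) (hsmall : h * (4 * max Lf 0 + 2 * L1 + 2 * L2) < 1)
    (X Z YX YZ : Fin N → EuclideanSpace ℝ (Fin d))
    (hYX : ∀ i, YX i = X i + h • ((N : ℝ)⁻¹ • ∑ j, f (YX i - YX j) + u (YX i) YX))
    (hYZ : ∀ i, YZ i = Z i + h • ((N : ℝ)⁻¹ • ∑ j, f (YZ i - YZ j) + u (YZ i) YZ)) :
    (1 - h * (4 * max Lf 0 + 2 * L1 + 2 * L2)) * ∑ i, ‖YX i - YZ i‖ ^ 2
      ≤ ∑ i, ‖X i - Z i‖ ^ 2 := by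
  have hNpos : (0:ℝ) < N := by exact_mod_cast hN
  have hNne : (N:ℝ) ≠ 0 := ne_of_gt hNpos
  set e : Fin N → EuclideanSpace ℝ (Fin d) := fun i => YX i - YZ i with he
  set S : ℝ := ∑ i, ‖YX i - YZ i‖ ^ 2 with hS
  have hSe : (∑ i, ‖e i‖ ^ 2) = S := rfl
  have hSnn : 0 ≤ S := Finset.sum_nonneg fun i _ => sq_nonneg _
  -- the increment identity
  have hei : ∀ i, e i = (X i - Z i)
      + h • ((N:ℝ)⁻¹ • ∑ j, (f (YX i - YX j) - f (YZ i - YZ j))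
        + (u (YX i) YX - u (YZ i) YZ)) := by
    intro i
    show YX i - YZ i = _
    conv_lhs => rw [hYX i, hYZ i]
    rw [Finset.sum_sub_distrib]
    module
  have heq : ∀ i j : Fin N, ((YX i - YX j) - (YZ i - YZ j) : EuclideanSpace ℝ (Fin d))
      = e i - e j := by intro i j; simp only [he]; abel
  -- the double f-sum
  set P : ℝ := ∑ i, ∑ j, ⟪e i, f (YX i - YX j) - f (YZ i - YZ j)⟫ with hP
  have hPswap : P = ∑ i, ∑ j, -⟪e j, f (YX i - YX j) - f (YZ i - YZ j)⟫ := by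
    rw [hP, Finset.sum_comm]
    refine Finset.sum_congr rfl fun i _ => Finset.sum_congr rfl fun j _ => ?_
    have h1 : YX j - YX i = -(YX i - YX j) := by abel
    have h2 : YZ j - YZ i = -(YZ i - YZ j) := by abel
    rw [h1, h2, hodd, hodd]
    rw [show -f (YX i - YX j) - -f (YZ i - YZ j)
        = -(f (YX i - YX j) - f (YZ i - YZ j)) by abel, inner_neg_right]
  have hP2 : 2 * P = ∑ i, ∑ j, ⟪e i - e j,
      f (YX i - YX j) - f (YZ i - YZ j)⟫ := by
    rw [two_mul]
    nth_rewrite 2 [hPswap]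
    nth_rewrite 1 [hP]
    rw [← Finset.sum_add_distrib]
    refine Finset.sum_congr rfl fun i _ => ?_
    rw [← Finset.sum_add_distrib]
    refine Finset.sum_congr rfl fun j _ => ?_
    rw [inner_sub_left (e i) (e j) (f (YX i - YX j) - f (YZ i - YZ j))]; ring
  have hPbound : P ≤ 2 * (N:ℝ) * max Lf 0 * S := by
    have step1 : 2 * P ≤ ∑ i, ∑ j, max Lf 0 * ‖e i - e j‖ ^ 2 := by
      rw [hP2]
      refine Finset.sum_le_sum fun i _ => Finset.sum_le_sum fun j _ => ?_
      have hij := hf (YX i - YX j) (YZ i - YZ j)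
      rw [heq i j] at hij
      calc ⟪e i - e j, f (YX i - YX j) - f (YZ i - YZ j)⟫ ≤ Lf * ‖e i - e j‖ ^ 2 := hij
      _ ≤ max Lf 0 * ‖e i - e j‖ ^ 2 :=
          mul_le_mul_of_nonneg_right (le_max_left _ _) (sq_nonneg _)
    have step2 : ∑ i, ∑ j, max Lf 0 * ‖e i - e j‖ ^ 2
        ≤ ∑ i : Fin N, ∑ j : Fin N, (max Lf 0 * (2 * ‖e i‖ ^ 2) + max Lf 0 * (2 * ‖e j‖ ^ 2)) := by
      refine Finset.sum_le_sum fun i _ => Finset.sum_le_sum fun j _ => ?_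
      rw [← mul_add]
      refine mul_le_mul_of_nonneg_left ?_ (le_max_right _ _)
      nlinarith [norm_sub_le (e i) (e j), norm_nonneg (e i), norm_nonneg (e j),
        norm_nonneg (e i - e j), sq_nonneg (‖e i‖ - ‖e j‖)]
    have step3 : ∑ i : Fin N, ∑ j : Fin N, (max Lf 0 * (2 * ‖e i‖ ^ 2) + max Lf 0 * (2 * ‖e j‖ ^ 2))
        = 4 * (N:ℝ) * max Lf 0 * S := by
      calc ∑ i : Fin N, ∑ j : Fin N, (max Lf 0 * (2 * ‖e i‖ ^ 2) + max Lf 0 * (2 * ‖e j‖ ^ 2))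
          = ∑ i : Fin N, ((N:ℝ) * (max Lf 0 * (2 * ‖e i‖ ^ 2)) + max Lf 0 * (2 * S)) := by
            refine Finset.sum_congr rfl fun i _ => ?_
            rw [Finset.sum_add_distrib, Finset.sum_const, Finset.card_univ, Fintype.card_fin,
              nsmul_eq_mul, ← Finset.mul_sum, ← Finset.mul_sum, hSe]
        _ = (N:ℝ) * (max Lf 0 * (2 * S)) + (N:ℝ) * (max Lf 0 * (2 * S)) := by
            rw [Finset.sum_add_distrib, Finset.sum_const, Finset.card_univ, Fintype.card_fin,
              nsmul_eq_mul, ← Finset.mul_sum, ← Finset.mul_sum, ← Finset.mul_sum, hSe]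
        _ = 4 * (N:ℝ) * max Lf 0 * S := by ring
    linarith
  -- the u bound
  have hU : ∑ i, ⟪e i, u (YX i) YX - u (YZ i) YZ⟫ ≤ (L1 + L2) * S := by
    have hpt : ∀ i : Fin N, ⟪e i, u (YX i) YX - u (YZ i) YZ⟫
        ≤ L1 * ‖e i‖ ^ 2 + L2 * ((N:ℝ)⁻¹ * S) := fun i => hu (YX i) (YZ i) YX YZ
    calc ∑ i, ⟪e i, u (YX i) YX - u (YZ i) YZ⟫
        ≤ ∑ i, (L1 * ‖e i‖ ^ 2 + L2 * ((N:ℝ)⁻¹ * S)) := Finset.sum_le_sum fun i _ => hpt i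
    _ = L1 * S + (N:ℝ) * (L2 * ((N:ℝ)⁻¹ * S)) := by
        rw [Finset.sum_add_distrib, ← Finset.mul_sum, hSe, Finset.sum_const, Finset.card_univ,
          Fintype.card_fin, nsmul_eq_mul]
    _ = (L1 + L2) * S := by field_simp
  -- the main identity
  have hmain : ∀ i, ‖e i‖ ^ 2 = ⟪e i, X i - Z i⟫
      + h * ((N:ℝ)⁻¹ * ∑ j, ⟪e i, f (YX i - YX j) - f (YZ i - YZ j)⟫
        + ⟪e i, u (YX i) YX - u (YZ i) YZ⟫) := by
    intro i
    rw [show ‖e i‖ ^ 2 = ⟪e i, e i⟫ from (real_inner_self_eq_norm_sq _).symm]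
    nth_rewrite 2 [hei i]
    rw [inner_add_right, real_inner_smul_right, inner_add_right, real_inner_smul_right,
      inner_sum]
  have hDbound : ∀ i, ⟪e i, X i - Z i⟫ ≤ (1/2) * ‖e i‖ ^ 2 + (1/2) * ‖X i - Z i‖ ^ 2 := by
    intro i
    have := real_inner_le_norm (e i) (X i - Z i)
    nlinarith [sq_nonneg (‖e i‖ - ‖X i - Z i‖)]
  have h2 : S = (∑ i, ⟪e i, X i - Z i⟫)
      + h * ((N:ℝ)⁻¹ * P + ∑ i, ⟪e i, u (YX i) YX - u (YZ i) YZ⟫) := by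
    have hexp : S = ∑ i, (⟪e i, X i - Z i⟫
        + h * ((N:ℝ)⁻¹ * ∑ j, ⟪e i, f (YX i - YX j) - f (YZ i - YZ j)⟫
          + ⟪e i, u (YX i) YX - u (YZ i) YZ⟫)) := by
      rw [← hSe]
      exact Finset.sum_congr rfl fun i _ => hmain i
    rw [hexp, Finset.sum_add_distrib, ← Finset.mul_sum, Finset.sum_add_distrib,
      ← Finset.mul_sum, ← hP]
  have h3 : (∑ i, ⟪e i, X i - Z i⟫) ≤ (1/2) * S + (1/2) * ∑ i, ‖X i - Z i‖ ^ 2 := by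
    calc (∑ i, ⟪e i, X i - Z i⟫)
        ≤ ∑ i, ((1/2) * ‖e i‖ ^ 2 + (1/2) * ‖X i - Z i‖ ^ 2) :=
          Finset.sum_le_sum fun i _ => hDbound i
      _ = (1/2) * S + (1/2) * ∑ i, ‖X i - Z i‖ ^ 2 := by
          rw [Finset.sum_add_distrib, ← Finset.mul_sum, hSe, ← Finset.mul_sum]
  have hPfin : (N:ℝ)⁻¹ * P ≤ 2 * max Lf 0 * S := by
    calc (N:ℝ)⁻¹ * P ≤ (N:ℝ)⁻¹ * (2 * (N:ℝ) * max Lf 0 * S) :=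
          mul_le_mul_of_nonneg_left hPbound (by positivity)
      _ = 2 * max Lf 0 * S := by field_simp
  have hfinal : S ≤ (1/2) * S + (1/2) * (∑ i, ‖X i - Z i‖ ^ 2)
      + h * (2 * max Lf 0 * S + (L1 + L2) * S) := by
    have h4 : h * ((N:ℝ)⁻¹ * P + ∑ i, ⟪e i, u (YX i) YX - u (YZ i) YZ⟫)
        ≤ h * (2 * max Lf 0 * S + (L1 + L2) * S) := by
      apply mul_le_mul_of_nonneg_left _ hh.le
      linarith
    linarith [h2, h3, h4]
  nlinarith [hfinal]
end

section
/- Let d ≥ 1 and define f : ℝ^d → ℝ^d by f(x) = −x|x|². Then for every real p ≥ 2 and all x, y ∈ ℝ^d: (|x|^{p−2} − |y|^{p−2}) ⟨x + y, f(x − y)⟩ ≤ 0. In particular, f satisfies the additional symmetry condition with constant L = 0. -/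
open scoped RealInnerProductSpace

/-- the cubic kernel `f(x) = −x|x|²` satisfies the additional symmetry
condition with constant `L = 0`: for every real `p ≥ 2` and all `x, y`,
`(|x|^{p−2} − |y|^{p−2}) ⟨x + y, f(x − y)⟩ ≤ 0`. Real exponents are `rpow` powers. -/
theorem cubic_kernel_additional_symmetry
    (d : ℕ) (hd : 1 ≤ d)
    (f : EuclideanSpace ℝ (Fin d) → EuclideanSpace ℝ (Fin d))
    (hf : ∀ x, f x = - (‖x‖ ^ 2 • x)) :
    ∀ p : ℝ, 2 ≤ p → ∀ x y : EuclideanSpace ℝ (Fin d),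
      (‖x‖ ^ (p - 2) - ‖y‖ ^ (p - 2)) * ⟪x + y, f (x - y)⟫ ≤ 0 := by
  intro p hp x y
  have hinner : ⟪x + y, f (x - y)⟫ = -(‖x - y‖ ^ 2 * (‖x‖ ^ 2 - ‖y‖ ^ 2)) := by
    rw [hf]
    rw [inner_neg_right, real_inner_smul_right]
    have : ⟪x + y, x - y⟫ = ‖x‖ ^ 2 - ‖y‖ ^ 2 := by
      rw [inner_sub_right, inner_add_left, inner_add_left,
        real_inner_self_eq_norm_sq, real_inner_self_eq_norm_sq,
        real_inner_comm y x]
      ring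
    rw [this]
  rw [hinner]
  have hsign : 0 ≤ (‖x‖ ^ (p - 2) - ‖y‖ ^ (p - 2)) * (‖x‖ ^ 2 - ‖y‖ ^ 2) := by
    rcases le_total ‖y‖ ‖x‖ with h | h
    · apply mul_nonneg
      · have := Real.rpow_le_rpow (norm_nonneg y) h (by linarith : (0:ℝ) ≤ p - 2)
        linarith
      · have := pow_le_pow_left₀ (norm_nonneg y) h 2
        linarith
    · have h1 : ‖x‖ ^ (p - 2) ≤ ‖y‖ ^ (p - 2) :=
        Real.rpow_le_rpow (norm_nonneg x) h (by linarith)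
      have h2 : ‖x‖ ^ 2 ≤ ‖y‖ ^ 2 := pow_le_pow_left₀ (norm_nonneg x) h 2
      nlinarith
  nlinarith [sq_nonneg ‖x - y‖, sq_nonneg (‖x‖ ^ (p-2) - ‖y‖ ^ (p-2))]
end

section
/- Let f : ℝ → ℝ be an odd function (f(−x) = −f(x) for all x) satisfying the one-sided Lipschitz condition (x − y)(f(x) − f(y)) ≤ L(x − y)² for all x, y ∈ ℝ and some L ∈ ℝ. Then f satisfies the additional symmetry condition: for every real p ≥ 2 and all x, y ∈ ℝ, (|x|^{p−2} − |y|^{p−2})(x + y)·f(x − y) ≤ max(L, 0)·(|x|^p + |y|^p). -/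
/-- a one-dimensional odd one-sided Lipschitz function satisfies the
additional symmetry condition: for every real `p ≥ 2` and all `x, y ∈ ℝ`,
`(|x|^{p−2} − |y|^{p−2})(x + y) f(x − y) ≤ max(L,0)(|x|^p + |y|^p)`.
Real exponents are `rpow` powers. -/
theorem odd_one_sided_lipschitz_additional_symmetry
    (f : ℝ → ℝ) (L : ℝ)
    (hodd : ∀ x, f (-x) = - f x)
    (hOSL : ∀ x y : ℝ, (x - y) * (f x - f y) ≤ L * (x - y) ^ 2) :
    ∀ p : ℝ, 2 ≤ p → ∀ x y : ℝ,
      (|x| ^ (p - 2) - |y| ^ (p - 2)) * ((x + y) * f (x - y))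
        ≤ max L 0 * (|x| ^ p + |y| ^ p) := by
  have hf0 : f 0 = 0 := by
    have h := hodd 0
    simp at h
    linarith
  have hM0 : (0:ℝ) ≤ max L 0 := le_max_right _ _
  have hLM : L ≤ max L 0 := le_max_left _ _
  have key : ∀ t : ℝ, t * f t ≤ max L 0 * t ^ 2 := by
    intro t
    have h := hOSL t 0
    simp [hf0] at h
    nlinarith [sq_nonneg t]
  intro p hp x y
  have hax : 0 ≤ |x| ^ (p - 2) := Real.rpow_nonneg (abs_nonneg x) _
  have hbx : 0 ≤ |y| ^ (p - 2) := Real.rpow_nonneg (abs_nonneg y) _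
  have hpne : p - 2 + 2 ≠ 0 := by intro h; linarith
  have hxp : |x| ^ (p - 2) * x ^ 2 = |x| ^ p := by
    have : |x| ^ p = |x| ^ (p - 2) * |x| ^ (2:ℝ) := by
      rw [← Real.rpow_add' (abs_nonneg x) hpne]; norm_num
    rw [this, Real.rpow_two, sq_abs]
  have hyp : |y| ^ (p - 2) * y ^ 2 = |y| ^ p := by
    have : |y| ^ p = |y| ^ (p - 2) * |y| ^ (2:ℝ) := by
      rw [← Real.rpow_add' (abs_nonneg y) hpne]; norm_num
    rw [this, Real.rpow_two, sq_abs]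
  have h1 : 0 ≤ (|x| ^ (p - 2) - |y| ^ (p - 2)) * (x ^ 2 - y ^ 2) := by
    rcases le_total |x| |y| with h | h
    · have ha : |x| ^ (p - 2) ≤ |y| ^ (p - 2) :=
        Real.rpow_le_rpow (abs_nonneg x) h (by linarith)
      have hs : x ^ 2 ≤ y ^ 2 := by
        have := mul_self_le_mul_self (abs_nonneg x) h
        nlinarith [sq_abs x, sq_abs y]
      nlinarith
    · have ha : |y| ^ (p - 2) ≤ |x| ^ (p - 2) :=
        Real.rpow_le_rpow (abs_nonneg y) h (by linarith)
      have hs : y ^ 2 ≤ x ^ 2 := by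
        have := mul_self_le_mul_self (abs_nonneg y) h
        nlinarith [sq_abs x, sq_abs y]
      nlinarith
  have h2 : (|x| ^ (p - 2) - |y| ^ (p - 2)) * (x ^ 2 - y ^ 2) ≤ |x| ^ p + |y| ^ p := by
    have hy2 : 0 ≤ |x| ^ (p - 2) * y ^ 2 := mul_nonneg hax (sq_nonneg y)
    have hx2 : 0 ≤ |y| ^ (p - 2) * x ^ 2 := mul_nonneg hbx (sq_nonneg x)
    nlinarith
  rcases eq_or_ne x y with rfl | hxy
  · simp only [sub_self]
    have : (0:ℝ) ≤ max L 0 * (|x| ^ p + |x| ^ p) :=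
      mul_nonneg hM0 (by positivity)
    simpa using this
  · have hne : x - y ≠ 0 := sub_ne_zero.mpr hxy
    set c : ℝ := (|x| ^ (p - 2) - |y| ^ (p - 2)) * (x + y) * (x - y) / (x - y) ^ 2 with hc
    have hc0 : 0 ≤ c := by
      apply div_nonneg _ (sq_nonneg _)
      calc (0:ℝ) ≤ (|x| ^ (p - 2) - |y| ^ (p - 2)) * (x ^ 2 - y ^ 2) := h1
        _ = (|x| ^ (p - 2) - |y| ^ (p - 2)) * (x + y) * (x - y) := by ring
    calc (|x| ^ (p - 2) - |y| ^ (p - 2)) * ((x + y) * f (x - y))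
        = c * ((x - y) * f (x - y)) := by rw [hc]; field_simp
      _ ≤ c * (max L 0 * (x - y) ^ 2) := mul_le_mul_of_nonneg_left (key _) hc0
      _ = max L 0 * ((|x| ^ (p - 2) - |y| ^ (p - 2)) * (x ^ 2 - y ^ 2)) := by
          rw [hc]; field_simp; ring
      _ ≤ max L 0 * (|x| ^ p + |y| ^ p) := mul_le_mul_of_nonneg_left h2 hM0
end

section
/- Let d ≥ 1, let p ≥ 2 be real, let f : ℝ^d → ℝ^d be Borel measurable and odd, and let μ be a Borel probability measure on ℝ^d such that ∫∫ (1 + |x|^{p−2} + |y|^{p−2})(|x| + |y|)|f(x − y)| μ(dy)μ(dx) < ∞. Then the following decomposition identity holds: ∫∫ |x|^{p−2} ⟨x, f(x − y)⟩ μ(dy)μ(dx) = ∫∫ [ (1/2)|x|^{p−2} ⟨x − y, f(x − y)⟩ + (1/4)(|x|^{p−2} − |y|^{p−2}) ⟨x + y, f(x − y)⟩ ] μ(dy)μ(dx). -/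
open scoped RealInnerProductSpace
open MeasureTheory

private lemma aux_bound (a b s t F i : ℝ) (ha : 0 ≤ a) (hb : 0 ≤ b) (hs : 0 ≤ s)
    (ht : 0 ≤ t) (hF : 0 ≤ F) (hi : |i| ≤ s * F) :
    |a * i| ≤ (1 + a + b) * (s + t) * F := by
  rw [abs_mul, abs_of_nonneg ha]
  nlinarith [mul_le_mul_of_nonneg_left hi ha, mul_nonneg hF ht, mul_nonneg hF hs,
    mul_nonneg ha (mul_nonneg ht hF), mul_nonneg hb (mul_nonneg hs hF),
    mul_nonneg hb (mul_nonneg ht hF), abs_nonneg i]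

/-- Decomposition identity for the convolved drift after integration:
for a Borel measurable odd `f` and a probability measure `μ` with the stated integrability,
`∫∫ |x|^{p−2}⟨x, f(x−y)⟩ μ(dy)μ(dx)` equals
`∫∫ [½|x|^{p−2}⟨x−y, f(x−y)⟩ + ¼(|x|^{p−2} − |y|^{p−2})⟨x+y, f(x−y)⟩] μ(dy)μ(dx)`.
Real exponents are `rpow` powers. -/
theorem convolution_decomposition_identity
    (d : ℕ) (hd : 1 ≤ d) (p : ℝ) (hp : 2 ≤ p)
    (f : EuclideanSpace ℝ (Fin d) → EuclideanSpace ℝ (Fin d))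
    (hfm : Measurable f) (hodd : ∀ x, f (-x) = - f x)
    (μ : Measure (EuclideanSpace ℝ (Fin d))) [IsProbabilityMeasure μ]
    (hint : Integrable
      (fun q : EuclideanSpace ℝ (Fin d) × EuclideanSpace ℝ (Fin d) =>
        (1 + ‖q.1‖ ^ (p - 2) + ‖q.2‖ ^ (p - 2)) * (‖q.1‖ + ‖q.2‖) * ‖f (q.1 - q.2)‖)
      (μ.prod μ)) :
    ∫ x, ∫ y, ‖x‖ ^ (p - 2) * ⟪x, f (x - y)⟫ ∂μ ∂μ
      = ∫ x, ∫ y,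
          ((1 / 2) * ‖x‖ ^ (p - 2) * ⟪x - y, f (x - y)⟫
            + (1 / 4) * (‖x‖ ^ (p - 2) - ‖y‖ ^ (p - 2)) * ⟪x + y, f (x - y)⟫) ∂μ ∂μ := by
  classical
  set ν := μ.prod μ with hν
  set gA : EuclideanSpace ℝ (Fin d) × EuclideanSpace ℝ (Fin d) → ℝ :=
    fun q => ‖q.1‖ ^ (p - 2) * ⟪q.1, f (q.1 - q.2)⟫ with hgA
  set gB : EuclideanSpace ℝ (Fin d) × EuclideanSpace ℝ (Fin d) → ℝ :=
    fun q => ‖q.1‖ ^ (p - 2) * ⟪q.2, f (q.1 - q.2)⟫ with hgB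
  set gC : EuclideanSpace ℝ (Fin d) × EuclideanSpace ℝ (Fin d) → ℝ :=
    fun q => ‖q.2‖ ^ (p - 2) * ⟪q.1, f (q.1 - q.2)⟫ with hgC
  set gD : EuclideanSpace ℝ (Fin d) × EuclideanSpace ℝ (Fin d) → ℝ :=
    fun q => ‖q.2‖ ^ (p - 2) * ⟪q.2, f (q.1 - q.2)⟫ with hgD
  have hfq : Measurable fun q : EuclideanSpace ℝ (Fin d) × EuclideanSpace ℝ (Fin d) =>
      f (q.1 - q.2) := by fun_prop
  have hr1 : Measurable fun q : EuclideanSpace ℝ (Fin d) × EuclideanSpace ℝ (Fin d) =>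
      ‖q.1‖ ^ (p - 2) := by fun_prop
  have hr2 : Measurable fun q : EuclideanSpace ℝ (Fin d) × EuclideanSpace ℝ (Fin d) =>
      ‖q.2‖ ^ (p - 2) := by fun_prop
  have hmA : Measurable gA := hr1.mul (measurable_fst.inner hfq)
  have hmB : Measurable gB := hr1.mul (measurable_snd.inner hfq)
  have hmC : Measurable gC := hr2.mul (measurable_fst.inner hfq)
  have hmD : Measurable gD := hr2.mul (measurable_snd.inner hfq)
  have hrn1 : ∀ q : EuclideanSpace ℝ (Fin d) × EuclideanSpace ℝ (Fin d),
      (0:ℝ) ≤ ‖q.1‖ ^ (p - 2) := fun q => Real.rpow_nonneg (norm_nonneg _) _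
  have hrn2 : ∀ q : EuclideanSpace ℝ (Fin d) × EuclideanSpace ℝ (Fin d),
      (0:ℝ) ≤ ‖q.2‖ ^ (p - 2) := fun q => Real.rpow_nonneg (norm_nonneg _) _
  have hinn1 : ∀ q : EuclideanSpace ℝ (Fin d) × EuclideanSpace ℝ (Fin d),
      |(⟪q.1, f (q.1 - q.2)⟫ : ℝ)| ≤ ‖q.1‖ * ‖f (q.1 - q.2)‖ :=
    fun q => abs_real_inner_le_norm _ _
  have hinn2 : ∀ q : EuclideanSpace ℝ (Fin d) × EuclideanSpace ℝ (Fin d),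
      |(⟪q.2, f (q.1 - q.2)⟫ : ℝ)| ≤ ‖q.2‖ * ‖f (q.1 - q.2)‖ :=
    fun q => abs_real_inner_le_norm _ _
  -- integrability of the four pieces
  have hA : Integrable gA ν := by
    refine hint.mono' hmA.aestronglyMeasurable (Filter.Eventually.of_forall fun q => ?_)
    rw [Real.norm_eq_abs]
    exact aux_bound _ _ _ _ _ _ (hrn1 q) (hrn2 q) (norm_nonneg _) (norm_nonneg _)
      (norm_nonneg _) (hinn1 q)
  have hB : Integrable gB ν := by
    refine hint.mono' hmB.aestronglyMeasurable (Filter.Eventually.of_forall fun q => ?_)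
    rw [Real.norm_eq_abs]
    refine (aux_bound (‖q.1‖ ^ (p-2)) (‖q.2‖ ^ (p-2)) ‖q.2‖ ‖q.1‖ ‖f (q.1 - q.2)‖ _
      (hrn1 q) (hrn2 q) (norm_nonneg _) (norm_nonneg _) (norm_nonneg _) (hinn2 q)).trans_eq ?_
    ring
  have hC : Integrable gC ν := by
    refine hint.mono' hmC.aestronglyMeasurable (Filter.Eventually.of_forall fun q => ?_)
    rw [Real.norm_eq_abs]
    refine (aux_bound (‖q.2‖ ^ (p-2)) (‖q.1‖ ^ (p-2)) ‖q.1‖ ‖q.2‖ ‖f (q.1 - q.2)‖ _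
      (hrn2 q) (hrn1 q) (norm_nonneg _) (norm_nonneg _) (norm_nonneg _) (hinn1 q)).trans_eq ?_
    ring
  have hD : Integrable gD ν := by
    refine hint.mono' hmD.aestronglyMeasurable (Filter.Eventually.of_forall fun q => ?_)
    rw [Real.norm_eq_abs]
    refine (aux_bound (‖q.2‖ ^ (p-2)) (‖q.1‖ ^ (p-2)) ‖q.2‖ ‖q.1‖ ‖f (q.1 - q.2)‖ _
      (hrn2 q) (hrn1 q) (norm_nonneg _) (norm_nonneg _) (norm_nonneg _) (hinn2 q)).trans_eq ?_
    ring
  -- oddness: f (y - x) = - f (x - y)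
  have hoddswap : ∀ x y : EuclideanSpace ℝ (Fin d), f (y - x) = - f (x - y) := by
    intro x y
    rw [← neg_sub x y]
    exact hodd _
  -- swap symmetry : ∫ gA = - ∫ gD and ∫ gB = - ∫ gC
  have swapA : ∫ q, gA q ∂ν = - ∫ q, gD q ∂ν := by
    have h1 : ∫ q : EuclideanSpace ℝ (Fin d) × EuclideanSpace ℝ (Fin d), gA q.swap ∂ν
        = ∫ q, gA q ∂ν := integral_prod_swap gA
    rw [← h1]
    have h2 : (fun q : EuclideanSpace ℝ (Fin d) × EuclideanSpace ℝ (Fin d) => gA q.swap)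
        = fun q => - gD q := by
      funext q
      simp only [hgA, hgD, Prod.fst_swap, Prod.snd_swap, hoddswap q.1 q.2, inner_neg_right]
      ring
    rw [h2, integral_neg]
  have swapB : ∫ q, gB q ∂ν = - ∫ q, gC q ∂ν := by
    have h1 : ∫ q : EuclideanSpace ℝ (Fin d) × EuclideanSpace ℝ (Fin d), gB q.swap ∂ν
        = ∫ q, gB q ∂ν := integral_prod_swap gB
    rw [← h1]
    have h2 : (fun q : EuclideanSpace ℝ (Fin d) × EuclideanSpace ℝ (Fin d) => gB q.swap)
        = fun q => - gC q := by
      funext q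
      simp only [hgB, hgC, Prod.fst_swap, Prod.snd_swap, hoddswap q.1 q.2, inner_neg_right]
      ring
    rw [h2, integral_neg]
  -- the combination function equal to the RHS integrand
  set G : EuclideanSpace ℝ (Fin d) × EuclideanSpace ℝ (Fin d) → ℝ := fun q =>
    (3/4) * gA q - (1/4) * gB q - (1/4) * gC q - (1/4) * gD q with hG
  have hGint : Integrable G ν :=
    (((hA.const_mul _).sub (hB.const_mul _)).sub (hC.const_mul _)).sub (hD.const_mul _)
  have hGeq : ∀ x y : EuclideanSpace ℝ (Fin d),
      ((1 / 2) * ‖x‖ ^ (p - 2) * ⟪x - y, f (x - y)⟫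
        + (1 / 4) * (‖x‖ ^ (p - 2) - ‖y‖ ^ (p - 2)) * ⟪x + y, f (x - y)⟫)
      = G (x, y) := by
    intro x y
    simp only [hG, hgA, hgB, hgC, hgD, inner_sub_left, inner_add_left]
    ring
  -- rewrite both sides as product integrals
  have hL : ∫ x, ∫ y, ‖x‖ ^ (p - 2) * ⟪x, f (x - y)⟫ ∂μ ∂μ = ∫ q, gA q ∂ν :=
    integral_integral hA
  have hR : ∫ x, ∫ y,
        ((1 / 2) * ‖x‖ ^ (p - 2) * ⟪x - y, f (x - y)⟫
          + (1 / 4) * (‖x‖ ^ (p - 2) - ‖y‖ ^ (p - 2)) * ⟪x + y, f (x - y)⟫) ∂μ ∂μ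
      = ∫ q, G q ∂ν := by
    calc ∫ x, ∫ y,
          ((1 / 2) * ‖x‖ ^ (p - 2) * ⟪x - y, f (x - y)⟫
            + (1 / 4) * (‖x‖ ^ (p - 2) - ‖y‖ ^ (p - 2)) * ⟪x + y, f (x - y)⟫) ∂μ ∂μ
        = ∫ x, ∫ y, G (x, y) ∂μ ∂μ := by
          simp only [hGeq]
      _ = ∫ q, G q ∂ν := integral_integral hGint
  rw [hL, hR]
  -- compute ∫ G
  have hGval : ∫ q, G q ∂ν
      = (3/4) * ∫ q, gA q ∂ν - (1/4) * ∫ q, gB q ∂ν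
        - (1/4) * ∫ q, gC q ∂ν - (1/4) * ∫ q, gD q ∂ν := by
    have e1 : ∫ q, ((3/4) * gA q - (1/4) * gB q) ∂ν
        = (∫ q, (3/4) * gA q ∂ν) - ∫ q, (1/4) * gB q ∂ν :=
      integral_sub (hA.const_mul _) (hB.const_mul _)
    have e2 : ∫ q, ((3/4) * gA q - (1/4) * gB q - (1/4) * gC q) ∂ν
        = (∫ q, ((3/4) * gA q - (1/4) * gB q) ∂ν) - ∫ q, (1/4) * gC q ∂ν :=
      integral_sub ((hA.const_mul _).sub (hB.const_mul _)) (hC.const_mul _)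
    have e3 : ∫ q, ((3/4) * gA q - (1/4) * gB q - (1/4) * gC q - (1/4) * gD q) ∂ν
        = (∫ q, ((3/4) * gA q - (1/4) * gB q - (1/4) * gC q) ∂ν) - ∫ q, (1/4) * gD q ∂ν :=
      integral_sub (((hA.const_mul _).sub (hB.const_mul _)).sub (hC.const_mul _))
        (hD.const_mul _)
    simp only [hG]
    rw [e3, e2, e1, integral_const_mul, integral_const_mul, integral_const_mul,
      integral_const_mul]
  rw [hGval]
  linarith [swapA, swapB]
end

section
/- Let d, l ≥ 1, m > 2 and L ∈ ℝ. Let f : ℝ^d → ℝ^d be Borel measurable and odd, and f_σ : ℝ^d → ℝ^{d×l} Borel measurable with f_σ(0) = 0, such that for all x, x' ∈ ℝ^d: ⟨x − x', f(x) − f(x')⟩ + 2(m−1)|f_σ(x) − f_σ(x')|² ≤ L|x − x'|². Let μ be a Borel probability measure on ℝ^d with finite second moment such that ∫∫ (|x||f(x−y)| + |f_σ(x−y)|²) μ(dy)μ(dx) < ∞. Then (with the convolutions (f∗μ)(x) = ∫f(x−y)μ(dy) and (f_σ∗μ)(x) = ∫f_σ(x−y)μ(dy), defined for μ-almost every x):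 ∫ ( ⟨x, (f∗μ)(x)⟩ + (m−1)|(f_σ∗μ)(x)|² ) μ(dx) ≤ L·( ∫|x|² μ(dx) − |∫ x μ(dx)|² ), i.e., the left-hand side is bounded by L times the variance of μ. -/
open scoped RealInnerProductSpace
open MeasureTheory

/-!
By Jensen's inequality `‖∫ g‖² ≤ ∫ ‖g‖²` and Fubini, the left-hand side is at most the integral of
`⟪x, f (x - y)⟫ + (m - 1) ‖fσ (x - y)‖²` against `μ ⊗ μ`. Exchanging `x` and `y` and using that `f`
is odd, the first term integrates to half of `⟪x - y, f (x - y)⟫`, so the integrand may be replaced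
by half of `⟪z, f z⟫ + 2 (m - 1) ‖fσ z‖² ≤ L ‖z‖²` at `z = x - y` (the hypothesis with `x' = 0`).
Finally `∫∫ ‖x - y‖² dμ dμ` is twice the variance of `μ`.
-/

variable {α : Type*} [MeasurableSpace α] {μ : Measure α}
  {E F : Type*} [NormedAddCommGroup E] [InnerProductSpace ℝ E]
  [NormedAddCommGroup F] [NormedSpace ℝ F]

theorem sq_integral_le_integral_sq [IsProbabilityMeasure μ] {g : α → ℝ} (hg : MemLp g 2 μ) :
    (∫ a, g a ∂μ) ^ 2 ≤ ∫ a, g a ^ 2 ∂μ := by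
  have h := ProbabilityTheory.variance_nonneg g μ
  rw [ProbabilityTheory.variance_eq_sub hg, sub_nonneg] at h
  exact h

theorem norm_integral_sq_le_integral_norm_sq [IsProbabilityMeasure μ] {h : α → F}
    (hh : Integrable (fun a => ‖h a‖ ^ 2) μ) :
    ‖∫ a, h a ∂μ‖ ^ 2 ≤ ∫ a, ‖h a‖ ^ 2 ∂μ := by
  by_cases hi : Integrable h μ
  · have hL2 : MemLp (fun a => ‖h a‖) 2 μ :=
      (memLp_two_iff_integrable_sq_norm hi.norm.aestronglyMeasurable).2 (by simpa using hh)
    calc ‖∫ a, h a ∂μ‖ ^ 2 ≤ (∫ a, ‖h a‖ ∂μ) ^ 2 := by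
          gcongr; exact norm_integral_le_integral_norm _
      _ ≤ ∫ a, ‖h a‖ ^ 2 ∂μ := sq_integral_le_integral_sq hL2
  · rw [integral_undef hi, norm_zero, zero_pow two_ne_zero]
    exact integral_nonneg fun a => sq_nonneg ‖h a‖

theorem inner_integral_eq_integral_inner_of_integrable_norm_mul [CompleteSpace E] {g : α → E}
    (v : E) (hg : AEStronglyMeasurable g μ) (hvg : Integrable (fun a => ‖v‖ * ‖g a‖) μ) :
    ⟪v, ∫ a, g a ∂μ⟫ = ∫ a, ⟪v, g a⟫ ∂μ := by
  rcases eq_or_ne v 0 with rfl | hv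
  · simp
  · have hgi : Integrable g μ := (integrable_norm_iff hg).1 <| by
      simpa [inv_mul_cancel_left₀ (norm_ne_zero_iff.2 hv)] using hvg.const_mul ‖v‖⁻¹
    exact (integral_inner hgi v).symm

theorem MeasureTheory.Integrable.inner_of_norm_mul {v w : α → E} (hv : AEStronglyMeasurable v μ)
    (hw : AEStronglyMeasurable w μ) (h : Integrable (fun a => ‖v a‖ * ‖w a‖) μ) :
    Integrable (fun a => ⟪v a, w a⟫) μ :=
  h.mono' (hv.inner hw) (ae_of_all _ fun _ => norm_inner_le_norm _ _)

theorem integral_inner_integral_add_norm_sq_integral_le_integral_prod [CompleteSpace E]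
    {β : Type*} [MeasurableSpace β] {ν : Measure β} [SFinite μ] [IsProbabilityMeasure ν]
    {v : α → E} {k : α × β → E} {h : α × β → F} {c : ℝ} (hc : 0 ≤ c)
    (hv : AEStronglyMeasurable v μ) (hk : AEStronglyMeasurable k (μ.prod ν))
    (hh : AEStronglyMeasurable h (μ.prod ν))
    (hvk : Integrable (fun q => ‖v q.1‖ * ‖k q‖) (μ.prod ν))
    (hh2 : Integrable (fun q => ‖h q‖ ^ 2) (μ.prod ν)) :
    ∫ x, (⟪v x, ∫ y, k (x, y) ∂ν⟫ + c * ‖∫ y, h (x, y) ∂ν‖ ^ 2) ∂μ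
      ≤ ∫ q, (⟪v q.1, k q⟫ + c * ‖h q‖ ^ 2) ∂(μ.prod ν) := by
  have hvk' : Integrable (fun q => ⟪v q.1, k q⟫) (μ.prod ν) := hvk.inner_of_norm_mul hv.comp_fst hk
  have hinner : ∀ᵐ x ∂μ, ⟪v x, ∫ y, k (x, y) ∂ν⟫ = ∫ y, ⟪v x, k (x, y)⟫ ∂ν := by
    filter_upwards [hk.prodMk_left, hvk.prod_right_ae] with x hkx hvkx
    exact inner_integral_eq_integral_inner_of_integrable_norm_mul (v x) hkx hvkx
  have hjensen : ∀ᵐ x ∂μ, ‖∫ y, h (x, y) ∂ν‖ ^ 2 ≤ ∫ y, ‖h (x, y)‖ ^ 2 ∂ν := by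
    filter_upwards [hh2.prod_right_ae] with x hx
    exact norm_integral_sq_le_integral_norm_sq hx
  have hA : Integrable (fun x => ⟪v x, ∫ y, k (x, y) ∂ν⟫) μ :=
    hvk'.integral_prod_left.congr (hinner.mono fun x hx => hx.symm)
  have hB : Integrable (fun x => ‖∫ y, h (x, y) ∂ν‖ ^ 2) μ :=
    hh2.integral_prod_left.mono' (hh.integral_prod_right'.norm.pow 2) <|
      hjensen.mono fun x hx => by rwa [Real.norm_of_nonneg (sq_nonneg _)]
  have hΦ : Integrable (fun q => ⟪v q.1, k q⟫ + c * ‖h q‖ ^ 2) (μ.prod ν) :=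
    hvk'.add (hh2.const_mul c)
  rw [integral_prod _ hΦ]
  refine integral_mono_ae (hA.add (hB.const_mul c)) hΦ.integral_prod_left ?_
  filter_upwards [hinner, hjensen, hvk'.prod_right_ae, hh2.prod_right_ae] with x hxk hxh hk' hh'
  rw [integral_add hk' (hh'.const_mul c), integral_const_mul, hxk]
  gcongr

section Symmetrization

variable {f : E → E}

theorem inner_swap_fst_apply_sub_of_odd (hf : f.Odd) (q : E × E) :
    ⟪q.swap.1, f (q.swap.1 - q.swap.2)⟫ = -⟪q.2, f (q.1 - q.2)⟫ := by
  rw [Prod.fst_swap, Prod.snd_swap, ← neg_sub, hf.eq, inner_neg_right]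

variable [MeasurableSpace E] {μ : Measure E} [SFinite μ]

theorem MeasureTheory.Integrable.inner_snd_apply_sub_of_odd (hf : f.Odd)
    (hint : Integrable (fun q : E × E => ⟪q.1, f (q.1 - q.2)⟫) (μ.prod μ)) :
    Integrable (fun q : E × E => ⟪q.2, f (q.1 - q.2)⟫) (μ.prod μ) := by
  have hswap := hint.swap
  simp only [Function.comp_def, inner_swap_fst_apply_sub_of_odd hf] at hswap
  simpa using hswap.neg

theorem MeasureTheory.Integrable.inner_sub_apply_sub_of_odd (hf : f.Odd)
    (hint : Integrable (fun q : E × E => ⟪q.1, f (q.1 - q.2)⟫) (μ.prod μ)) :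
    Integrable (fun q : E × E => ⟪q.1 - q.2, f (q.1 - q.2)⟫) (μ.prod μ) := by
  simp only [inner_sub_left]
  exact hint.sub (hint.inner_snd_apply_sub_of_odd hf)

theorem two_mul_integral_inner_fst_apply_sub_of_odd (hf : f.Odd)
    (hint : Integrable (fun q : E × E => ⟪q.1, f (q.1 - q.2)⟫) (μ.prod μ)) :
    2 * ∫ q, ⟪q.1, f (q.1 - q.2)⟫ ∂(μ.prod μ) = ∫ q, ⟪q.1 - q.2, f (q.1 - q.2)⟫ ∂(μ.prod μ) := by
  have hswap := integral_prod_swap (μ := μ) (ν := μ) fun q : E × E => ⟪q.1, f (q.1 - q.2)⟫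
  simp only [inner_swap_fst_apply_sub_of_odd hf, integral_neg] at hswap
  simp only [inner_sub_left]
  rw [integral_sub hint (hint.inner_snd_apply_sub_of_odd hf)]
  linarith

end Symmetrization

theorem integrable_id_of_integrable_norm_sq {G : Type*} [NormedAddCommGroup G] [MeasurableSpace G]
    [BorelSpace G] [SecondCountableTopology G] {μ : Measure G} [IsFiniteMeasure μ]
    (h2 : Integrable (fun x => ‖x‖ ^ 2) μ) : Integrable (fun x : G => x) μ :=
  ((memLp_two_iff_integrable_sq_norm aestronglyMeasurable_id).2 h2).integrable one_le_two

theorem integrable_inner_prod [MeasurableSpace E] {μ ν : Measure E}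
    (hμ : Integrable (fun x : E => x) μ) (hν : Integrable (fun y : E => y) ν) :
    Integrable (fun q : E × E => ⟪q.1, q.2⟫) (μ.prod ν) :=
  hμ.op_fst_snd (op := fun x y : E => ⟪x, y⟫) continuous_inner
    ⟨1, fun x y => by simpa using norm_inner_le_norm (𝕜 := ℝ) x y⟩ hν

theorem integral_inner_prod [CompleteSpace E] [MeasurableSpace E] {μ ν : Measure E}
    [SFinite μ] [SFinite ν]
    (hμ : Integrable (fun x : E => x) μ) (hν : Integrable (fun y : E => y) ν) :
    ∫ q : E × E, ⟪q.1, q.2⟫ ∂(μ.prod ν) = ⟪∫ x, x ∂μ, ∫ y, y ∂ν⟫ :=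
  integral_prod_bilin (innerSL ℝ (E := E)) hμ hν

section Variance

variable [MeasurableSpace E] [BorelSpace E] [SecondCountableTopology E] {μ : Measure E}

theorem integrable_norm_sub_sq_prod [IsFiniteMeasure μ] (h2 : Integrable (fun x => ‖x‖ ^ 2) μ) :
    Integrable (fun q : E × E => ‖q.1 - q.2‖ ^ 2) (μ.prod μ) := by
  have h1 := integrable_id_of_integrable_norm_sq h2
  simp only [norm_sub_sq_real]
  exact ((h2.comp_fst μ).sub ((integrable_inner_prod h1 h1).const_mul 2)).add (h2.comp_snd μ)

theorem integral_norm_sub_sq_prod [CompleteSpace E] [IsProbabilityMeasure μ]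
    (h2 : Integrable (fun x => ‖x‖ ^ 2) μ) :
    ∫ q : E × E, ‖q.1 - q.2‖ ^ 2 ∂(μ.prod μ) = 2 * (∫ x, ‖x‖ ^ 2 ∂μ - ‖∫ x, x ∂μ‖ ^ 2) := by
  have h1 := integrable_id_of_integrable_norm_sq h2
  have hfst : Integrable (fun q : E × E => ‖q.1‖ ^ 2) (μ.prod μ) := h2.comp_fst μ
  have hinner : Integrable (fun q : E × E => 2 * ⟪q.1, q.2⟫) (μ.prod μ) :=
    (integrable_inner_prod h1 h1).const_mul 2
  have hdiff : Integrable (fun q : E × E => ‖q.1‖ ^ 2 - 2 * ⟪q.1, q.2⟫) (μ.prod μ) :=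
    hfst.sub hinner
  simp only [norm_sub_sq_real]
  rw [integral_add hdiff (h2.comp_snd μ), integral_sub hfst hinner, integral_const_mul,
    integral_inner_prod h1 h1, real_inner_self_eq_norm_sq, integral_fun_fst (fun x : E => ‖x‖ ^ 2),
    integral_fun_snd (fun x : E => ‖x‖ ^ 2)]
  simp only [probReal_univ, one_smul]
  ring

end Variance

/-- Matrices `ℝ^{d×l}` with the Frobenius norm are modelled by
`EuclideanSpace ℝ (Fin d × Fin l)`. -/
theorem convolved_pair_bounded_by_variance_general
    (d l : ℕ) (m L : ℝ) (hm : 2 < m)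
    (f : EuclideanSpace ℝ (Fin d) → EuclideanSpace ℝ (Fin d))
    (hfm : Measurable f) (hodd : ∀ x, f (-x) = - f x)
    (fσ : EuclideanSpace ℝ (Fin d) → EuclideanSpace ℝ (Fin d × Fin l))
    (hfσm : Measurable fσ) (hfσ0 : fσ 0 = 0)
    (hmono : ∀ x x' : EuclideanSpace ℝ (Fin d),
      ⟪x - x', f x - f x'⟫ + 2 * (m - 1) * ‖fσ x - fσ x'‖ ^ 2 ≤ L * ‖x - x'‖ ^ 2)
    (μ : Measure (EuclideanSpace ℝ (Fin d))) [IsProbabilityMeasure μ]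
    (hμ2 : Integrable (fun x => ‖x‖ ^ 2) μ)
    (hint : Integrable
      (fun q : EuclideanSpace ℝ (Fin d) × EuclideanSpace ℝ (Fin d) =>
        ‖q.1‖ * ‖f (q.1 - q.2)‖ + ‖fσ (q.1 - q.2)‖ ^ 2) (μ.prod μ)) :
    ∫ x, (⟪x, ∫ y, f (x - y) ∂μ⟫ + (m - 1) * ‖∫ y, fσ (x - y) ∂μ‖ ^ 2) ∂μ
      ≤ L * ((∫ x, ‖x‖ ^ 2 ∂μ) - ‖∫ x, x ∂μ‖ ^ 2) := by
  have hsub : Measurable fun q : EuclideanSpace ℝ (Fin d) × _ => q.1 - q.2 :=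
    measurable_fst.sub measurable_snd
  have hfk := hfm.comp hsub
  obtain ⟨hF', hG⟩ := (integrable_add_iff_of_nonneg
    (measurable_fst.norm.mul hfk.norm).aestronglyMeasurable
    (ae_of_all _ fun _ => mul_nonneg (norm_nonneg _) (norm_nonneg _))
    (ae_of_all _ fun _ => sq_nonneg _)).1 hint
  have hF : Integrable (fun q => ⟪q.1, f (q.1 - q.2)⟫) (μ.prod μ) :=
    Integrable.inner_of_norm_mul measurable_fst.aestronglyMeasurable hfk.aestronglyMeasurable hF'
  have hf0 : f 0 = 0 :=
    have := IsAddTorsionFree.of_isTorsionFree ℝ (EuclideanSpace ℝ (Fin d))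
    Function.Odd.map_zero hodd
  have hdissip : ∀ z, ⟪z, f z⟫ + 2 * (m - 1) * ‖fσ z‖ ^ 2 ≤ L * ‖z‖ ^ 2 := fun z => by
    simpa [hf0, hfσ0] using hmono z 0
  calc ∫ x, (⟪x, ∫ y, f (x - y) ∂μ⟫ + (m - 1) * ‖∫ y, fσ (x - y) ∂μ‖ ^ 2) ∂μ
      ≤ ∫ q, (⟪q.1, f (q.1 - q.2)⟫ + (m - 1) * ‖fσ (q.1 - q.2)‖ ^ 2) ∂(μ.prod μ) :=
        integral_inner_integral_add_norm_sq_integral_le_integral_prod (by linarith)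
          aestronglyMeasurable_id hfk.aestronglyMeasurable
          (hfσm.comp hsub).aestronglyMeasurable hF' hG
    _ = (∫ q, (⟪q.1 - q.2, f (q.1 - q.2)⟫ + 2 * (m - 1) * ‖fσ (q.1 - q.2)‖ ^ 2) ∂(μ.prod μ))
          / 2 := by
        rw [integral_add hF (hG.const_mul _), integral_add (hF.inner_sub_apply_sub_of_odd hodd)
          (hG.const_mul _), integral_const_mul, integral_const_mul,
          ← two_mul_integral_inner_fst_apply_sub_of_odd hodd hF]
        ring
    _ ≤ (∫ q, L * ‖q.1 - q.2‖ ^ 2 ∂(μ.prod μ)) / 2 := by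
        refine div_le_div_of_nonneg_right (integral_mono ?_ ?_ fun q => hdissip _) zero_le_two
        · exact (hF.inner_sub_apply_sub_of_odd hodd).add (hG.const_mul _)
        · exact (integrable_norm_sub_sq_prod hμ2).const_mul L
    _ = L * ((∫ x, ‖x‖ ^ 2 ∂μ) - ‖∫ x, x ∂μ‖ ^ 2) := by
        rw [integral_const_mul, integral_norm_sub_sq_prod hμ2]
        ring

/-- Lemma: the convolved drift/diffusion pair after integration is
bounded by the variance. Matrices `ℝ^{d×l}` with the Frobenius norm are modelled by
`EuclideanSpace ℝ (Fin d × Fin l)`. -/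
theorem convolved_pair_bounded_by_variance
    (d l : ℕ) (hd : 1 ≤ d) (hl : 1 ≤ l) (m L : ℝ) (hm : 2 < m)
    (f : EuclideanSpace ℝ (Fin d) → EuclideanSpace ℝ (Fin d))
    (hfm : Measurable f) (hodd : ∀ x, f (-x) = - f x)
    (fσ : EuclideanSpace ℝ (Fin d) → EuclideanSpace ℝ (Fin d × Fin l))
    (hfσm : Measurable fσ) (hfσ0 : fσ 0 = 0)
    (hmono : ∀ x x' : EuclideanSpace ℝ (Fin d),
      ⟪x - x', f x - f x'⟫ + 2 * (m - 1) * ‖fσ x - fσ x'‖ ^ 2 ≤ L * ‖x - x'‖ ^ 2)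
    (μ : Measure (EuclideanSpace ℝ (Fin d))) [IsProbabilityMeasure μ]
    (hμ2 : Integrable (fun x => ‖x‖ ^ 2) μ)
    (hint : Integrable
      (fun q : EuclideanSpace ℝ (Fin d) × EuclideanSpace ℝ (Fin d) =>
        ‖q.1‖ * ‖f (q.1 - q.2)‖ + ‖fσ (q.1 - q.2)‖ ^ 2) (μ.prod μ)) :
    ∫ x, (⟪x, ∫ y, f (x - y) ∂μ⟫ + (m - 1) * ‖∫ y, fσ (x - y) ∂μ‖ ^ 2) ∂μ
      ≤ L * ((∫ x, ‖x‖ ^ 2 ∂μ) - ‖∫ x, x ∂μ‖ ^ 2) :=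
  convolved_pair_bounded_by_variance_general d l m L hm f hfm hodd fσ hfσm hfσ0 hmono μ hμ2 hint
end

section
/- Let d, l ≥ 1, m > 2 and L ∈ ℝ. Let f : ℝ^d → ℝ^d be Borel measurable and odd, and f_σ : ℝ^d → ℝ^{d×l} Borel measurable, such that for all x, x' ∈ ℝ^d: ⟨x − x', f(x) − f(x')⟩ + 2(m−1)|f_σ(x) − f_σ(x')|² ≤ L|x − x'|². Let μ, ν be Borel probability measures on ℝ^d with finite second moments such that ∫∫∫∫ [ (|x| + |y|)(|f(x−x')| + |f(y−y')|) + (|f_σ(x−x')| + |f_σ(y−y')|)² ] μ(dx')ν(dy')μ(dx)ν(dy) < ∞. Then: ∫∫ ( ⟨x − y, (f∗μ)(x) − (f∗ν)(y)⟩ + (m−1)|(f_σ∗μ)(x) − (f_σ∗ν)(y)|² ) μ(dx)ν(dy) ≤ 2·max(L, 0)·∫∫ |x − y|² μ(dx)ν(dy). -/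
/-!
Realise `(x, y) ∼ μ ⊗ ν` together with an independent copy `(x', y')` and put `u = x - x'`,
`v = y - y'`. Jensen's inequality in the inner variables bounds the left side by
`𝔼[⟪x - y, f u - f v⟫ + (m - 1)‖fσ u - fσ v‖²]`. Exchanging the two copies replaces `x - y` by
`x' - y'` and, `f` being odd, `f u - f v` by its negative, so the inner-product term equals
`½ 𝔼⟪u - v, f u - f v⟫`. The monotonicity condition now bounds everything by
`½ L⁺ 𝔼‖u - v‖² ≤ 2 L⁺ 𝔼‖x - y‖²`.
-/

open scoped RealInnerProductSpace
open MeasureTheory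

section

variable {α : Type*} [MeasurableSpace α] {π : Measure α}
  {E : Type*} [NormedAddCommGroup E] [InnerProductSpace ℝ E]
  {F : Type*} [NormedAddCommGroup F]

theorem sq_norm_integral_le_integral_sq_norm [NormedSpace ℝ F] [IsProbabilityMeasure π]
    {u : α → F} (hu : MemLp u 2 π) : ‖∫ q, u q ∂π‖ ^ 2 ≤ ∫ q, ‖u q‖ ^ 2 ∂π := by
  have hvar := ProbabilityTheory.variance_nonneg (fun q => ‖u q‖) π
  rw [ProbabilityTheory.variance_eq_sub hu.norm, sub_nonneg] at hvar
  calc ‖∫ q, u q ∂π‖ ^ 2 ≤ (∫ q, ‖u q‖ ∂π) ^ 2 := by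
        gcongr; exact norm_integral_le_integral_norm u
    _ ≤ ∫ q, ‖u q‖ ^ 2 ∂π := hvar

theorem memLp_two_of_sq_norm_le {u : α → F} {b : α → ℝ} (hb : Integrable b π)
    (hu : AEStronglyMeasurable u π) (hle : ∀ q, ‖u q‖ ^ 2 ≤ b q) : MemLp u 2 π :=
  (memLp_two_iff_integrable_sq_norm hu).2 <|
    hb.mono' (hu.norm.pow 2) (ae_of_all _ fun q => by simpa using hle q)

theorem integrable_sq_norm_sub {u v : α → F} (hu : AEStronglyMeasurable u π)
    (hv : AEStronglyMeasurable v π) (h : Integrable (fun q => (‖u q‖ + ‖v q‖) ^ 2) π) :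
    Integrable (fun q => ‖u q - v q‖ ^ 2) π :=
  h.mono' (by fun_prop) (ae_of_all _ fun q => by
    simpa using pow_le_pow_left₀ (norm_nonneg _) (norm_sub_le (u q) (v q)) 2)

theorem sq_norm_integral_sub_le [NormedSpace ℝ F] [IsProbabilityMeasure π] {u v : α → F}
    (hu : AEStronglyMeasurable u π) (hv : AEStronglyMeasurable v π)
    (h : Integrable (fun q => (‖u q‖ + ‖v q‖) ^ 2) π) :
    ‖(∫ q, u q ∂π) - ∫ q, v q ∂π‖ ^ 2 ≤ ∫ q, ‖u q - v q‖ ^ 2 ∂π := by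
  have hu2 : MemLp u 2 π := memLp_two_of_sq_norm_le h hu fun q => by
    gcongr; exact le_add_of_nonneg_right (norm_nonneg _)
  have hv2 : MemLp v 2 π := memLp_two_of_sq_norm_le h hv fun q => by
    gcongr; exact le_add_of_nonneg_left (norm_nonneg _)
  rw [← integral_sub (hu2.integrable one_le_two) (hv2.integrable one_le_two)]
  exact sq_norm_integral_le_integral_sq_norm (hu2.sub hv2)

theorem integrable_inner_sub {w₁ w₂ u v : α → E} (hw₁ : AEStronglyMeasurable w₁ π)
    (hw₂ : AEStronglyMeasurable w₂ π) (hu : AEStronglyMeasurable u π)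
    (hv : AEStronglyMeasurable v π)
    (h : Integrable (fun q => (‖w₁ q‖ + ‖w₂ q‖) * (‖u q‖ + ‖v q‖)) π) :
    Integrable (fun q => ⟪w₁ q - w₂ q, u q - v q⟫) π :=
  h.mono' ((hw₁.sub hw₂).inner (hu.sub hv)) (ae_of_all _ fun q => by
    rw [Real.norm_eq_abs]
    exact (abs_real_inner_le_norm _ _).trans
      (mul_le_mul (norm_sub_le _ _) (norm_sub_le _ _) (norm_nonneg _) (by positivity)))

theorem inner_integral_sub_eq_integral_inner [CompleteSpace E] {u v : α → E} (w : E) {c : ℝ}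
    (hw : ‖w‖ ≤ c) (hu : AEStronglyMeasurable u π) (hv : AEStronglyMeasurable v π)
    (h : Integrable (fun q => c * (‖u q‖ + ‖v q‖)) π) :
    ⟪w, (∫ q, u q ∂π) - ∫ q, v q ∂π⟫ = ∫ q, ⟪w, u q - v q⟫ ∂π := by
  rcases ((norm_nonneg w).trans hw).eq_or_lt with hc | hc
  · simp [norm_le_zero_iff.1 (hc ▸ hw)]
  have huv : Integrable (fun q => ‖u q‖ + ‖v q‖) π :=
    (integrable_const_mul_iff hc.ne'.isUnit _).1 h
  have hu1 : Integrable u π := (integrable_norm_iff hu).1 <|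
    huv.mono' hu.norm (ae_of_all _ fun q => by simp)
  have hv1 : Integrable v π := (integrable_norm_iff hv).1 <|
    huv.mono' hv.norm (ae_of_all _ fun q => by simp)
  rw [← integral_sub hu1 hv1]
  exact (integral_inner (hu1.sub hv1) w).symm

theorem integral_add_comp_swap [SFinite π] {A : α × α → ℝ} (hA : Integrable A (π.prod π)) :
    ∫ z, (A z + A z.swap) ∂(π.prod π) = 2 * ∫ z, A z ∂(π.prod π) := by
  rw [integral_add hA (hA.swap : Integrable (fun z => A z.swap) _), integral_prod_swap]
  ring

theorem MeasureTheory.MemLp.integrable_sq_norm_sub_prod [IsProbabilityMeasure π] {a : α → F}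
    (ha : MemLp a 2 π) : Integrable (fun z : α × α => ‖a z.1 - a z.2‖ ^ 2) (π.prod π) :=
  have h := (ha.comp_fst π).sub (ha.comp_snd π)
  (memLp_two_iff_integrable_sq_norm h.1).1 h

theorem integral_sq_norm_sub_prod_le [IsProbabilityMeasure π] {a : α → F} (ha : MemLp a 2 π) :
    ∫ z, ‖a z.1 - a z.2‖ ^ 2 ∂(π.prod π) ≤ 4 * ∫ x, ‖a x‖ ^ 2 ∂π := by
  have h2 : Integrable (fun x => ‖a x‖ ^ 2) π := (memLp_two_iff_integrable_sq_norm ha.1).1 ha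
  calc ∫ z, ‖a z.1 - a z.2‖ ^ 2 ∂(π.prod π)
      ≤ ∫ z, 2 * (‖a z.1‖ ^ 2 + ‖a z.2‖ ^ 2) ∂(π.prod π) := by
        refine integral_mono ha.integrable_sq_norm_sub_prod
          (((h2.comp_fst π).add (h2.comp_snd π)).const_mul 2) fun z => ?_
        calc ‖a z.1 - a z.2‖ ^ 2 ≤ (‖a z.1‖ + ‖a z.2‖) ^ 2 := by gcongr; exact norm_sub_le _ _
          _ ≤ 2 * (‖a z.1‖ ^ 2 + ‖a z.2‖ ^ 2) := add_sq_le
    _ = 4 * ∫ x, ‖a x‖ ^ 2 ∂π := by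
        rw [integral_const_mul, integral_add (h2.comp_fst π) (h2.comp_snd π),
          integral_fun_fst (fun x => ‖a x‖ ^ 2), integral_fun_snd (fun x => ‖a x‖ ^ 2)]
        simp only [probReal_univ, one_smul]
        ring

end

section

variable {E : Type*} [NormedAddCommGroup E] [InnerProductSpace ℝ E] [MeasurableSpace E]
  {F : Type*} [NormedAddCommGroup F]

theorem integral_inner_add_mul_integral_sq_le_of_odd {f : E → E} {g : E → F} {c K : ℝ}
    (hK : 0 ≤ K) (hodd : ∀ x, f (-x) = -f x)
    (hmono : ∀ x x', ⟪x - x', f x - f x'⟫ + 2 * c * ‖g x - g x'‖ ^ 2 ≤ K * ‖x - x'‖ ^ 2)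
    {ρ : Measure (E × E)} [IsProbabilityMeasure ρ]
    (hA : Integrable (fun z : (E × E) × (E × E) =>
      ⟪z.1.1 - z.1.2, f (z.1.1 - z.2.1) - f (z.1.2 - z.2.2)⟫) (ρ.prod ρ))
    (hB : Integrable (fun z : (E × E) × (E × E) =>
      ‖g (z.1.1 - z.2.1) - g (z.1.2 - z.2.2)‖ ^ 2) (ρ.prod ρ))
    (hw : MemLp (fun p : E × E => p.1 - p.2) 2 ρ) :
    ∫ z, ⟪z.1.1 - z.1.2, f (z.1.1 - z.2.1) - f (z.1.2 - z.2.2)⟫ ∂(ρ.prod ρ)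
        + c * ∫ z, ‖g (z.1.1 - z.2.1) - g (z.1.2 - z.2.2)‖ ^ 2 ∂(ρ.prod ρ)
      ≤ 2 * K * ∫ p, ‖p.1 - p.2‖ ^ 2 ∂ρ := by
  set A := fun z : (E × E) × (E × E) => ⟪z.1.1 - z.1.2, f (z.1.1 - z.2.1) - f (z.1.2 - z.2.2)⟫
  set B := fun z : (E × E) × (E × E) => ‖g (z.1.1 - z.2.1) - g (z.1.2 - z.2.2)‖ ^ 2
  -- exchanging the copies `z.1`, `z.2` negates `f (z.1.1 - z.2.1) - f (z.1.2 - z.2.2)` (`f` is odd)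
  have hpt : ∀ z, A z + A z.swap + 2 * c * B z
      ≤ K * ‖(z.1.1 - z.1.2) - (z.2.1 - z.2.2)‖ ^ 2 := by
    rintro ⟨⟨x, y⟩, ⟨x', y'⟩⟩
    have hswap : A ((x', y'), (x, y)) = -⟪x' - y', f (x - x') - f (y - y')⟫ := by
      simp only [A, ← neg_sub x x', ← neg_sub y y', hodd, ← inner_neg_right]
      congr 1; abel
    have hlag : x - y - (x' - y') = x - x' - (y - y') := by abel
    simpa only [Prod.swap_prod_mk, hswap, A, B, ← sub_eq_add_neg, ← inner_sub_left, hlag]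
      using hmono (x - x') (y - y')
  have hle : ∫ z, (A z + A z.swap + 2 * c * B z) ∂(ρ.prod ρ)
      ≤ ∫ z, K * ‖(z.1.1 - z.1.2) - (z.2.1 - z.2.2)‖ ^ 2 ∂(ρ.prod ρ) :=
    integral_mono ((hA.add hA.swap).add (hB.const_mul (2 * c)))
      (hw.integrable_sq_norm_sub_prod.const_mul K) hpt
  rw [integral_add (by exact hA.add hA.swap) (hB.const_mul _), integral_add_comp_swap hA,
    integral_const_mul, integral_const_mul] at hle
  have hD := mul_le_mul_of_nonneg_left (integral_sq_norm_sub_prod_le hw) hK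
  linarith

end

noncomputable def measureConv {E G : Type*} [Sub E] [MeasurableSpace E] [NormedAddCommGroup G]
    [NormedSpace ℝ G] (g : E → G) (μ : Measure E) (x : E) : G :=
  ∫ y, g (x - y) ∂μ

section

variable {E G : Type*} [MeasurableSpace E] [NormedAddCommGroup G] [NormedSpace ℝ G]
  {μ ν : Measure E}

theorem measureConv_eq_integral_prod_fst [Sub E] [SFinite μ] [IsProbabilityMeasure ν]
    (g : E → G) (x : E) :
    measureConv g μ x = ∫ q, g (x - q.1) ∂(μ.prod ν) := by
  simpa [measureConv] using (integral_fun_fst (μ := μ) (ν := ν) fun y => g (x - y)).symm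

theorem measureConv_eq_integral_prod_snd [Sub E] [IsProbabilityMeasure μ] [SFinite ν]
    (g : E → G) (y : E) :
    measureConv g ν y = ∫ q, g (y - q.2) ∂(μ.prod ν) := by
  simpa [measureConv] using (integral_fun_snd (μ := μ) (ν := ν) fun x => g (y - x)).symm

@[fun_prop]
theorem Measurable.measureConv [Sub E] [MeasurableSub₂ E] [SFinite μ] [MeasurableSpace G]
    [BorelSpace G] [SecondCountableTopology G] {g : E → G} (hg : Measurable g) :
    Measurable (measureConv g μ) :=
  (StronglyMeasurable.integral_prod_right (f := fun x y => g (x - y))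
    (hg.comp measurable_sub).stronglyMeasurable).measurable

end

section

variable {E : Type*} [NormedAddCommGroup E] [MeasurableSpace E] [BorelSpace E]
  [SecondCountableTopology E] {μ ν : Measure E} [IsProbabilityMeasure μ] [IsProbabilityMeasure ν]

theorem inner_measureConv_sub_eq_integral [InnerProductSpace ℝ E] [CompleteSpace E] {f : E → E}
    (hf : Measurable f) (x y : E)
    (h : Integrable (fun q : E × E => (‖x‖ + ‖y‖) * (‖f (x - q.1)‖ + ‖f (y - q.2)‖))
      (μ.prod ν)) :
    ⟪x - y, measureConv f μ x - measureConv f ν y⟫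
      = ∫ q, ⟪x - y, f (x - q.1) - f (y - q.2)⟫ ∂(μ.prod ν) := by
  rw [measureConv_eq_integral_prod_fst (ν := ν), measureConv_eq_integral_prod_snd (μ := μ)]
  exact inner_integral_sub_eq_integral_inner _ (norm_sub_le x y)
    (hf.comp (measurable_const.sub measurable_fst)).aestronglyMeasurable
    (hf.comp (measurable_const.sub measurable_snd)).aestronglyMeasurable h

theorem sq_norm_measureConv_sub_le {F : Type*} [NormedAddCommGroup F] [NormedSpace ℝ F]
    [MeasurableSpace F] [BorelSpace F] [SecondCountableTopology F] {g : E → F}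
    (hg : Measurable g) (x y : E)
    (h : Integrable (fun q : E × E => (‖g (x - q.1)‖ + ‖g (y - q.2)‖) ^ 2) (μ.prod ν)) :
    ‖measureConv g μ x - measureConv g ν y‖ ^ 2
      ≤ ∫ q, ‖g (x - q.1) - g (y - q.2)‖ ^ 2 ∂(μ.prod ν) := by
  rw [measureConv_eq_integral_prod_fst (ν := ν), measureConv_eq_integral_prod_snd (μ := μ)]
  exact sq_norm_integral_sub_le
    (hg.comp (measurable_const.sub measurable_fst)).aestronglyMeasurable
    (hg.comp (measurable_const.sub measurable_snd)).aestronglyMeasurable h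

theorem integral_inner_measureConv_sub [InnerProductSpace ℝ E] [CompleteSpace E] {f : E → E}
    (hf : Measurable f)
    (hA : Integrable (fun z : (E × E) × (E × E) =>
      ⟪z.1.1 - z.1.2, f (z.1.1 - z.2.1) - f (z.1.2 - z.2.2)⟫) ((μ.prod ν).prod (μ.prod ν)))
    (h : Integrable (fun z : (E × E) × (E × E) =>
      (‖z.1.1‖ + ‖z.1.2‖) * (‖f (z.1.1 - z.2.1)‖ + ‖f (z.1.2 - z.2.2)‖))
      ((μ.prod ν).prod (μ.prod ν))) :
    Integrable (fun p : E × E => ⟪p.1 - p.2, measureConv f μ p.1 - measureConv f ν p.2⟫)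
        (μ.prod ν) ∧
      ∫ p, ⟪p.1 - p.2, measureConv f μ p.1 - measureConv f ν p.2⟫ ∂(μ.prod ν)
        = ∫ z, ⟪z.1.1 - z.1.2, f (z.1.1 - z.2.1) - f (z.1.2 - z.2.2)⟫
            ∂((μ.prod ν).prod (μ.prod ν)) := by
  have hae : (fun p : E × E => ⟪p.1 - p.2, measureConv f μ p.1 - measureConv f ν p.2⟫)
      =ᵐ[μ.prod ν] fun p => ∫ q, ⟪p.1 - p.2, f (p.1 - q.1) - f (p.2 - q.2)⟫ ∂(μ.prod ν) :=
    h.prod_right_ae.mono fun p hp => inner_measureConv_sub_eq_integral hf p.1 p.2 hp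
  exact ⟨hA.integral_prod_left.congr hae.symm,
    (integral_congr_ae hae).trans (integral_prod _ hA).symm⟩

theorem integral_sq_norm_measureConv_sub_le {F : Type*} [NormedAddCommGroup F]
    [NormedSpace ℝ F] [MeasurableSpace F] [BorelSpace F] [SecondCountableTopology F]
    {g : E → F} (hg : Measurable g)
    (hB : Integrable (fun z : (E × E) × (E × E) =>
      ‖g (z.1.1 - z.2.1) - g (z.1.2 - z.2.2)‖ ^ 2) ((μ.prod ν).prod (μ.prod ν)))
    (h : Integrable (fun z : (E × E) × (E × E) =>
      (‖g (z.1.1 - z.2.1)‖ + ‖g (z.1.2 - z.2.2)‖) ^ 2) ((μ.prod ν).prod (μ.prod ν))) :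
    Integrable (fun p : E × E => ‖measureConv g μ p.1 - measureConv g ν p.2‖ ^ 2)
        (μ.prod ν) ∧
      ∫ p, ‖measureConv g μ p.1 - measureConv g ν p.2‖ ^ 2 ∂(μ.prod ν)
        ≤ ∫ z, ‖g (z.1.1 - z.2.1) - g (z.1.2 - z.2.2)‖ ^ 2 ∂((μ.prod ν).prod (μ.prod ν)) := by
  have hae : ∀ᵐ p ∂(μ.prod ν), ‖measureConv g μ p.1 - measureConv g ν p.2‖ ^ 2
      ≤ ∫ q, ‖g (p.1 - q.1) - g (p.2 - q.2)‖ ^ 2 ∂(μ.prod ν) :=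
    h.prod_right_ae.mono fun p hp => sq_norm_measureConv_sub_le hg p.1 p.2 hp
  have hN : Integrable (fun p : E × E => ‖measureConv g μ p.1 - measureConv g ν p.2‖ ^ 2)
      (μ.prod ν) :=
    hB.integral_prod_left.mono' (Measurable.aestronglyMeasurable (by fun_prop))
      (hae.mono fun p hp => by simpa using hp)
  exact ⟨hN, (integral_mono_ae hN hB.integral_prod_left hae).trans_eq (integral_prod _ hB).symm⟩

end

theorem convolved_two_measure_monotonicity_general
    (d l : ℕ) (m L : ℝ) (hm : 2 < m)
    (f : EuclideanSpace ℝ (Fin d) → EuclideanSpace ℝ (Fin d))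
    (hfm : Measurable f) (hodd : ∀ x, f (-x) = - f x)
    (fσ : EuclideanSpace ℝ (Fin d) → EuclideanSpace ℝ (Fin d × Fin l))
    (hfσm : Measurable fσ)
    (hmono : ∀ x x' : EuclideanSpace ℝ (Fin d),
      ⟪x - x', f x - f x'⟫ + 2 * (m - 1) * ‖fσ x - fσ x'‖ ^ 2 ≤ L * ‖x - x'‖ ^ 2)
    (μ ν : Measure (EuclideanSpace ℝ (Fin d)))
    [IsProbabilityMeasure μ] [IsProbabilityMeasure ν]
    (hμ2 : Integrable (fun x => ‖x‖ ^ 2) μ) (hν2 : Integrable (fun x => ‖x‖ ^ 2) ν)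
    (hint : Integrable
      (fun q : (EuclideanSpace ℝ (Fin d) × EuclideanSpace ℝ (Fin d)) ×
          (EuclideanSpace ℝ (Fin d) × EuclideanSpace ℝ (Fin d)) =>
        (‖q.1.1‖ + ‖q.1.2‖) * (‖f (q.1.1 - q.2.1)‖ + ‖f (q.1.2 - q.2.2)‖)
          + (‖fσ (q.1.1 - q.2.1)‖ + ‖fσ (q.1.2 - q.2.2)‖) ^ 2)
      ((μ.prod ν).prod (μ.prod ν))) :
    ∫ x, ∫ y,
        (⟪x - y, (∫ x', f (x - x') ∂μ) - ∫ y', f (y - y') ∂ν⟫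
          + (m - 1) * ‖(∫ x', fσ (x - x') ∂μ) - ∫ y', fσ (y - y') ∂ν‖ ^ 2) ∂ν ∂μ
      ≤ 2 * max L 0 * ∫ x, ∫ y, ‖x - y‖ ^ 2 ∂ν ∂μ := by
  obtain ⟨hHf, hHg⟩ := (integrable_add_iff_of_nonneg (by fun_prop)
    (ae_of_all _ fun _ => by positivity) (ae_of_all _ fun _ => by positivity)).1 hint
  have hA := integrable_inner_sub (by fun_prop) (by fun_prop)
    (hfm.comp (by fun_prop)).aestronglyMeasurable (hfm.comp (by fun_prop)).aestronglyMeasurable hHf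
  have hB := integrable_sq_norm_sub (hfσm.comp (by fun_prop)).aestronglyMeasurable
    (hfσm.comp (by fun_prop)).aestronglyMeasurable hHg
  obtain ⟨hI, hI_eq⟩ := integral_inner_measureConv_sub hfm hA hHf
  obtain ⟨hN, hN_le⟩ := integral_sq_norm_measureConv_sub_le hfσm hB hHg
  have hw : MemLp (fun p => p.1 - p.2) 2 (μ.prod ν) :=
    ((memLp_two_iff_integrable_sq_norm (by fun_prop)).2 hμ2 |>.comp_fst ν).sub
      ((memLp_two_iff_integrable_sq_norm (by fun_prop)).2 hν2 |>.comp_snd μ)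
  have hkey := integral_inner_add_mul_integral_sq_le_of_odd (c := m - 1) (le_max_right L 0) hodd
    (fun x x' => (hmono x x').trans (by gcongr; exact le_max_left L 0)) hA hB hw
  calc _ = ∫ p, (⟪p.1 - p.2, measureConv f μ p.1 - measureConv f ν p.2⟫
          + (m - 1) * ‖measureConv fσ μ p.1 - measureConv fσ ν p.2‖ ^ 2) ∂(μ.prod ν) :=
        (integral_prod _ (hI.add (hN.const_mul _))).symm
    _ ≤ _ := by
        rw [integral_add hI (hN.const_mul _), integral_const_mul, hI_eq]
        gcongr; linarith
    _ ≤ _ := hkey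
    _ = _ := by rw [integral_prod _ ((memLp_two_iff_integrable_sq_norm hw.1).1 hw)]

/-- Lemma: two-measure convolved monotonicity estimate. Matrices
`ℝ^{d×l}` with the Frobenius norm are modelled by `EuclideanSpace ℝ (Fin d × Fin l)`. -/
theorem convolved_two_measure_monotonicity
    (d l : ℕ) (hd : 1 ≤ d) (hl : 1 ≤ l) (m L : ℝ) (hm : 2 < m)
    (f : EuclideanSpace ℝ (Fin d) → EuclideanSpace ℝ (Fin d))
    (hfm : Measurable f) (hodd : ∀ x, f (-x) = - f x)
    (fσ : EuclideanSpace ℝ (Fin d) → EuclideanSpace ℝ (Fin d × Fin l))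
    (hfσm : Measurable fσ)
    (hmono : ∀ x x' : EuclideanSpace ℝ (Fin d),
      ⟪x - x', f x - f x'⟫ + 2 * (m - 1) * ‖fσ x - fσ x'‖ ^ 2 ≤ L * ‖x - x'‖ ^ 2)
    (μ ν : Measure (EuclideanSpace ℝ (Fin d)))
    [IsProbabilityMeasure μ] [IsProbabilityMeasure ν]
    (hμ2 : Integrable (fun x => ‖x‖ ^ 2) μ) (hν2 : Integrable (fun x => ‖x‖ ^ 2) ν)
    (hint : Integrable
      (fun q : (EuclideanSpace ℝ (Fin d) × EuclideanSpace ℝ (Fin d)) ×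
          (EuclideanSpace ℝ (Fin d) × EuclideanSpace ℝ (Fin d)) =>
        (‖q.1.1‖ + ‖q.1.2‖) * (‖f (q.1.1 - q.2.1)‖ + ‖f (q.1.2 - q.2.2)‖)
          + (‖fσ (q.1.1 - q.2.1)‖ + ‖fσ (q.1.2 - q.2.2)‖) ^ 2)
      ((μ.prod ν).prod (μ.prod ν))) :
    ∫ x, ∫ y,
        (⟪x - y, (∫ x', f (x - x') ∂μ) - ∫ y', f (y - y') ∂ν⟫
          + (m - 1) * ‖(∫ x', fσ (x - x') ∂μ) - ∫ y', fσ (y - y') ∂ν‖ ^ 2) ∂ν ∂μ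
      ≤ 2 * max L 0 * ∫ x, ∫ y, ‖x - y‖ ^ 2 ∂ν ∂μ :=
  convolved_two_measure_monotonicity_general d l m L hm f hfm hodd fσ hfσm hmono μ ν hμ2 hν2 hint
end
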